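/- arXiv:2507.21877 — 14 statements merged into one kernel-verified Lean document; each statement's English description precedes it below -/
import Mathlib

section
/- For any well order α and sequences s, t of elements of α, s ≤_g t (Gordeev's symmetric gap condition) holds if and only if s ≤_w t (weak gap condition) holds. -/
/-- The weak gap condition on finite sequences over a linear order. -/
def WeakGap {α : Type*} [LinearOrder α] (s t : List α) : Prop :=
  ∃ f : Fin s.length → Fin t.length,
    StrictMono f ∧
    (∀ i, s.get i ≤ t.get (f i)) ∧
    ∀ (i : ℕ) (h : i + 1 < s.length) (j : Fin t.length),
      f ⟨i, Nat.lt_of_succ_lt h⟩ < j → j < f ⟨i + 1, h⟩ → s.get ⟨i + 1, h⟩ ≤ t.get j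

/-- Gordeev's symmetric gap condition on finite sequences over a linear order. -/
def GordeevGap {α : Type*} [LinearOrder α] (s t : List α) : Prop :=
  ∃ f : Fin s.length → Fin t.length,
    StrictMono f ∧
    (∀ i, s.get i ≤ t.get (f i)) ∧
    ∀ (i : ℕ) (h : i + 1 < s.length) (j : Fin t.length),
      f ⟨i, Nat.lt_of_succ_lt h⟩ < j → j < f ⟨i + 1, h⟩ →
        s.get ⟨i, Nat.lt_of_succ_lt h⟩ ≤ t.get j ∨ s.get ⟨i + 1, h⟩ ≤ t.get j

private theorem gord_aux {α : Type*} [LinearOrder α] (s t : List α) :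
    ∀ m : ℕ, ∀ f : Fin s.length → Fin t.length,
      StrictMono f →
      (∀ i, s.get i ≤ t.get (f i)) →
      (∀ (i : ℕ) (h : i + 1 < s.length) (j : Fin t.length),
        f ⟨i, Nat.lt_of_succ_lt h⟩ < j → j < f ⟨i + 1, h⟩ →
          s.get ⟨i, Nat.lt_of_succ_lt h⟩ ≤ t.get j ∨ s.get ⟨i + 1, h⟩ ≤ t.get j) →
      (∑ x : Fin s.length, (t.length - (f x).val)) ≤ m →
      WeakGap s t := by
  intro m
  induction m using Nat.strong_induction_on with
  | _ m ih =>
    intro f hmono hle hgap hsum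
    by_cases hv : ∃ (i : ℕ) (h : i + 1 < s.length) (j : Fin t.length),
        f ⟨i, Nat.lt_of_succ_lt h⟩ < j ∧ j < f ⟨i + 1, h⟩ ∧
          ¬ s.get ⟨i + 1, h⟩ ≤ t.get j
    · obtain ⟨i, h, j, h1, h2, h3⟩ := hv
      set i0 : Fin s.length := ⟨i, Nat.lt_of_succ_lt h⟩ with hi0
      set i1 : Fin s.length := ⟨i + 1, h⟩ with hi1
      have hsij : s.get i0 ≤ t.get j := (hgap i h j h1 h2).resolve_right h3
      have hjlt : (t.get j) < s.get i1 := not_le.mp h3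
      set f' := Function.update f i0 j with hf'
      have hf'i0 : f' i0 = j := Function.update_self _ _ _
      have hf'ne : ∀ x, x ≠ i0 → f' x = f x := fun x hx => Function.update_of_ne hx _ _
      have hne10 : i1 ≠ i0 := by
        simp [hi0, hi1, Fin.ext_iff]
      -- strict monotonicity
      have hmono' : StrictMono f' := by
        intro a b hab
        by_cases ha : a = i0
        · subst ha
          have hb : b ≠ i0 := (ne_of_gt hab)
          rw [hf'i0, hf'ne b hb]
          have : i1 ≤ b := by
            simp only [hi1, Fin.le_def]
            exact hab
          exact lt_of_lt_of_le h2 (hmono.monotone this)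
        · by_cases hb : b = i0
          · subst hb
            rw [hf'i0, hf'ne a ha]
            exact lt_trans (hmono hab) h1
          · rw [hf'ne a ha, hf'ne b hb]
            exact hmono hab
      -- pointwise
      have hle' : ∀ x, s.get x ≤ t.get (f' x) := by
        intro x
        by_cases hx : x = i0
        · subst hx; rw [hf'i0]; exact hsij
        · rw [hf'ne x hx]; exact hle x
      -- gap condition
      have hgap' : ∀ (i' : ℕ) (h' : i' + 1 < s.length) (k : Fin t.length),
          f' ⟨i', Nat.lt_of_succ_lt h'⟩ < k → k < f' ⟨i' + 1, h'⟩ →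
            s.get ⟨i', Nat.lt_of_succ_lt h'⟩ ≤ t.get k ∨ s.get ⟨i' + 1, h'⟩ ≤ t.get k := by
        intro i' h' k hk1 hk2
        by_cases hc1 : i' = i
        · subst hc1
          have e0 : (⟨i', Nat.lt_of_succ_lt h'⟩ : Fin s.length) = i0 := rfl
          have e1 : (⟨i' + 1, h'⟩ : Fin s.length) = i1 := rfl
          rw [e0, hf'i0] at hk1
          rw [e1, hf'ne i1 hne10] at hk2
          exact hgap i' h' k (lt_trans h1 hk1) hk2
        · by_cases hc2 : i' + 1 = i
          · subst hc2
            -- here i = i' + 1, so ⟨i'+1, h'⟩ = i0 and i1 = ⟨i'+2, h⟩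
            have e1 : (⟨i' + 1, h'⟩ : Fin s.length) = i0 := rfl
            rw [e1, hf'i0] at hk2
            have e0 : f' ⟨i', Nat.lt_of_succ_lt h'⟩ = f ⟨i', Nat.lt_of_succ_lt h'⟩ := by
              apply hf'ne
              simp [hi0, Fin.ext_iff]
            rw [e0] at hk1
            rcases lt_trichotomy k (f i0) with hk | hk | hk
            · exact hgap i' h' k hk1 hk
            · right
              rw [e1]
              have : t.get k = t.get (f i0) := by rw [hk]
              rw [this]
              exact hle i0
            · -- f i0 < k < j, use the gap of f at (i, i+1)
              rcases hgap (i' + 1) h k hk (hk2.trans h2) with hg | hg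
              · exact Or.inr hg
              · -- s.get i1 ≤ t.get k, but t.get j < s.get i1 and s.get i0 ≤ t.get j
                right
                rw [e1]
                exact le_of_lt (lt_of_le_of_lt hsij (lt_of_lt_of_le hjlt hg))
          · have e0 : f' ⟨i', Nat.lt_of_succ_lt h'⟩ = f ⟨i', Nat.lt_of_succ_lt h'⟩ := by
              apply hf'ne; simp [hi0, Fin.ext_iff, hc1]
            have e1 : f' ⟨i' + 1, h'⟩ = f ⟨i' + 1, h'⟩ := by
              apply hf'ne; simp [hi0, Fin.ext_iff, hc2]
            rw [e0] at hk1; rw [e1] at hk2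
            exact hgap i' h' k hk1 hk2
      -- measure decreases
      have hlt : (∑ x : Fin s.length, (t.length - (f' x).val)) <
          (∑ x : Fin s.length, (t.length - (f x).val)) := by
        apply Finset.sum_lt_sum
        · intro x _
          by_cases hx : x = i0
          · subst hx; rw [hf'i0]
            exact Nat.sub_le_sub_left (le_of_lt h1) _
          · rw [hf'ne x hx]
        · refine ⟨i0, Finset.mem_univ _, ?_⟩
          rw [hf'i0]
          exact Nat.sub_lt_sub_left (f i0).isLt h1
      exact ih _ (lt_of_lt_of_le hlt hsum) f' hmono' hle' hgap' le_rfl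
    · push_neg at hv
      exact ⟨f, hmono, hle, fun i h j h1 h2 => hv i h j h1 h2⟩

/-- Gordeev's symmetric gap condition coincides with the weak gap condition. -/
theorem gordeevGap_iff_weakGap {α : Type*} [LinearOrder α] [WellFoundedLT α]
    (s t : List α) : GordeevGap s t ↔ WeakGap s t := by
  constructor
  · rintro ⟨f, hmono, hle, hgap⟩
    exact gord_aux s t _ f hmono hle hgap le_rfl
  · rintro ⟨f, hmono, hle, hgap⟩
    exact ⟨f, hmono, hle, fun i h j h1 h2 => Or.inr (hgap i h j h1 h2)⟩
end

section
/- The realizer-based strong gap condition ≤_s coincides with the recursively defined relation ≤_r: for all finite sequences s, t over a well order α, s ≤_s t holds iff s ≤_r t holds. -/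
/-- The strong gap condition on finite sequences over a linear order:
as the weak one, but additionally respecting the outer gap. -/
def StrongGap {α : Type*} [LinearOrder α] (s t : List α) : Prop :=
  ∃ f : Fin s.length → Fin t.length,
    StrictMono f ∧
    (∀ i, s.get i ≤ t.get (f i)) ∧
    (∀ (i : ℕ) (h : i + 1 < s.length) (j : Fin t.length),
      f ⟨i, Nat.lt_of_succ_lt h⟩ < j → j < f ⟨i + 1, h⟩ → s.get ⟨i + 1, h⟩ ≤ t.get j) ∧
    ∀ (h : 0 < s.length) (j : Fin t.length), j < f ⟨0, h⟩ → s.get ⟨0, h⟩ ≤ t.get j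

/-- The recursively defined strong gap relation. -/
inductive RecGap {α : Type*} [LinearOrder α] : List α → List α → Prop
  | nil (t : List α) : RecGap [] t
  | cons {β γ : α} {s t : List α} : β ≤ γ → RecGap s t → RecGap (β :: s) (γ :: t)
  | skip {β γ : α} {s t : List α} : β ≤ γ → RecGap (β :: s) t → RecGap (β :: s) (γ :: t)

lemma get_cons_zero' {α : Type*} {a : α} {l : List α} (h : 0 < (a :: l).length) :
    (a :: l).get ⟨0, h⟩ = a := rfl

lemma get_cons_succ' {α : Type*} {a : α} {l : List α} {k : ℕ} (h : k + 1 < (a :: l).length) :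
    (a :: l).get ⟨k + 1, h⟩ = l.get ⟨k, Nat.lt_of_succ_lt_succ h⟩ := rfl

lemma strongGap_recGap {α : Type*} [LinearOrder α] :
    ∀ {t s : List α}, StrongGap s t → RecGap s t := by
  intro t
  induction t with
  | nil =>
      rintro (_ | ⟨β, s'⟩) h
      · exact RecGap.nil []
      · obtain ⟨f, -, -, -, -⟩ := h
        exact (f ⟨0, Nat.succ_pos _⟩).elim0
  | cons γ t' ih =>
      rintro (_ | ⟨β, s'⟩) h
      · exact RecGap.nil _
      · obtain ⟨f, hsm, hval, hinner, houter⟩ := h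
        have hlt : (γ :: t').length = t'.length + 1 := rfl
        have hls : (β :: s').length = s'.length + 1 := rfl
        have h0 : 0 < (β :: s').length := Nat.succ_pos _
        -- nat-level monotonicity
        have hmono : ∀ (a b : ℕ) (ha : a < (β :: s').length) (hb : b < (β :: s').length),
            a < b → (f ⟨a, ha⟩).val < (f ⟨b, hb⟩).val := by
          intro a b ha hb hab
          exact hsm (Fin.mk_lt_mk.mpr hab)
        by_cases hf0 : (f ⟨0, h0⟩).val = 0
        · -- head matched: cons case
          have hβγ : β ≤ γ := by
            have hv := hval ⟨0, h0⟩
            have hfe : f ⟨0, h0⟩ = ⟨0, Nat.succ_pos _⟩ := Fin.ext hf0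
            rwa [hfe, get_cons_zero', get_cons_zero'] at hv
          have hpos : ∀ (k : ℕ) (hk : k + 1 < (β :: s').length),
              1 ≤ (f ⟨k + 1, hk⟩).val := by
            intro k hk
            have := hmono 0 (k + 1) h0 hk (Nat.succ_pos k)
            omega
          have hglt : ∀ i : Fin s'.length,
              (f ⟨i.val + 1, Nat.succ_lt_succ i.isLt⟩).val - 1 < t'.length := by
            intro i
            have h1 := (f ⟨i.val + 1, Nat.succ_lt_succ i.isLt⟩).isLt
            have h2 := hpos i.val (Nat.succ_lt_succ i.isLt)
            omega
          refine RecGap.cons hβγ (ih ⟨fun i =>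
            ⟨(f ⟨i.val + 1, Nat.succ_lt_succ i.isLt⟩).val - 1, hglt i⟩, ?_, ?_, ?_, ?_⟩)
          · intro a b hab
            have := hmono (a.val + 1) (b.val + 1) (Nat.succ_lt_succ a.isLt)
              (Nat.succ_lt_succ b.isLt) (Nat.succ_lt_succ hab)
            have h1 := hpos a.val (Nat.succ_lt_succ a.isLt)
            exact Fin.mk_lt_mk.mpr (by omega)
          · rintro ⟨k, hk⟩
            have hk' : k + 1 < (β :: s').length := Nat.succ_lt_succ hk
            have hv := hval ⟨k + 1, hk'⟩
            rw [get_cons_succ'] at hv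
            have hp := hpos k hk'
            have hge : (γ :: t').get (f ⟨k + 1, hk'⟩)
                = t'.get ⟨(f ⟨k + 1, hk'⟩).val - 1, by
                    have := (f ⟨k + 1, hk'⟩).isLt; omega⟩ := by
              have hfe : f ⟨k + 1, hk'⟩ = ⟨((f ⟨k + 1, hk'⟩).val - 1) + 1, by
                  have := (f ⟨k + 1, hk'⟩).isLt; omega⟩ := by
                refine Fin.ext ?_
                show (f ⟨k + 1, hk'⟩).val = (f ⟨k + 1, hk'⟩).val - 1 + 1
                omega
              conv_lhs => rw [hfe]
              rw [get_cons_succ']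
            rw [hge] at hv
            exact hv
          · rintro i hi ⟨jv, hj⟩ h1 h2
            have hi2 : i + 1 + 1 < (β :: s').length := Nat.succ_lt_succ hi
            have hi1 : i + 1 < (β :: s').length := Nat.lt_of_succ_lt hi2
            have hp1 := hpos i hi1
            have hp2 := hpos (i + 1) hi2
            have h1' : (f ⟨i + 1, hi1⟩).val - 1 < jv := Fin.mk_lt_mk.mp h1
            have h2' : jv < (f ⟨i + 1 + 1, hi2⟩).val - 1 := Fin.mk_lt_mk.mp h2
            have key := hinner (i + 1) hi2 ⟨jv + 1, Nat.succ_lt_succ hj⟩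
              (Fin.mk_lt_mk.mpr (by omega)) (Fin.mk_lt_mk.mpr (by omega))
            rwa [get_cons_succ', get_cons_succ'] at key
          · rintro h' ⟨jv, hj⟩ hjlt
            have h1' : 0 + 1 < (β :: s').length := Nat.succ_lt_succ h'
            have hlt0 : jv < (f ⟨0 + 1, h1'⟩).val - 1 := Fin.mk_lt_mk.mp hjlt
            have key := hinner 0 h1' ⟨jv + 1, Nat.succ_lt_succ hj⟩
              (Fin.mk_lt_mk.mpr (by omega)) (Fin.mk_lt_mk.mpr (by omega))
            rwa [get_cons_succ', get_cons_succ'] at key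
        · -- head skipped: skip case
          have hβγ : β ≤ γ := by
            have hv := houter h0 ⟨0, Nat.succ_pos _⟩ (Fin.mk_lt_mk.mpr (by omega))
            rwa [get_cons_zero', get_cons_zero'] at hv
          have hpos : ∀ (k : ℕ) (hk : k < (β :: s').length), 1 ≤ (f ⟨k, hk⟩).val := by
            intro k hk
            rcases Nat.eq_zero_or_pos k with rfl | hkpos
            · omega
            · have := hmono 0 k h0 hk hkpos
              omega
          have hglt : ∀ i : Fin (β :: s').length, (f ⟨i.val, i.isLt⟩).val - 1 < t'.length := by
            intro i
            have h1 := (f ⟨i.val, i.isLt⟩).isLt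
            have h2 := hpos i.val i.isLt
            omega
          refine RecGap.skip hβγ (ih ⟨fun i => ⟨(f ⟨i.val, i.isLt⟩).val - 1, hglt i⟩,
            ?_, ?_, ?_, ?_⟩)
          · intro a b hab
            have := hmono a.val b.val a.isLt b.isLt hab
            have h1 := hpos a.val a.isLt
            exact Fin.mk_lt_mk.mpr (by omega)
          · rintro ⟨k, hk⟩
            have hv := hval ⟨k, hk⟩
            have hp := hpos k hk
            have hge : (γ :: t').get (f ⟨k, hk⟩)
                = t'.get ⟨(f ⟨k, hk⟩).val - 1, by
                    have := (f ⟨k, hk⟩).isLt; omega⟩ := by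
              have hfe : f ⟨k, hk⟩ = ⟨((f ⟨k, hk⟩).val - 1) + 1, by
                  have := (f ⟨k, hk⟩).isLt; omega⟩ := by
                refine Fin.ext ?_
                show (f ⟨k, hk⟩).val = (f ⟨k, hk⟩).val - 1 + 1
                omega
              conv_lhs => rw [hfe]
              rw [get_cons_succ']
            rw [hge] at hv
            exact hv
          · rintro i hi ⟨jv, hj⟩ h1 h2
            have hi' : i < (β :: s').length := Nat.lt_of_succ_lt hi
            have hp1 := hpos i hi'
            have hp2 := hpos (i + 1) hi
            have h1' : (f ⟨i, hi'⟩).val - 1 < jv := Fin.mk_lt_mk.mp h1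
            have h2' : jv < (f ⟨i + 1, hi⟩).val - 1 := Fin.mk_lt_mk.mp h2
            have key := hinner i hi ⟨jv + 1, Nat.succ_lt_succ hj⟩
              (Fin.mk_lt_mk.mpr (by omega)) (Fin.mk_lt_mk.mpr (by omega))
            rwa [get_cons_succ'] at key
          · rintro h' ⟨jv, hj⟩ hjlt
            have hp := hpos 0 h'
            have hlt0 : jv < (f ⟨0, h'⟩).val - 1 := Fin.mk_lt_mk.mp hjlt
            have key := houter h' ⟨jv + 1, Nat.succ_lt_succ hj⟩
              (Fin.mk_lt_mk.mpr (by omega))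
            rwa [get_cons_succ'] at key

lemma recGap_strongGap {α : Type*} [LinearOrder α] {s t : List α}
    (h : RecGap s t) : StrongGap s t := by
  induction h with
  | nil t =>
      refine ⟨fun i => i.elim0, fun a => a.elim0, fun i => i.elim0, ?_, ?_⟩
      · intro i h; simp at h
      · intro h; simp at h
  | cons hβγ hrec ih =>
      rename_i β γ s t _
      obtain ⟨f, hsm, hval, hinner, houter⟩ := ih
      refine ⟨fun i => match i with
        | ⟨0, _⟩ => ⟨0, Nat.succ_pos _⟩
        | ⟨j+1, h⟩ => (f ⟨j, Nat.lt_of_succ_lt_succ h⟩).succ, ?_, ?_, ?_, ?_⟩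
      · rintro ⟨a, ha⟩ ⟨b, hb⟩ hab
        match a, b with
        | 0, 0 => exact absurd hab (lt_irrefl _)
        | 0, j+1 => exact Fin.mk_lt_mk.mpr (Nat.succ_pos _)
        | i+1, 0 => exact absurd hab (by simp [Fin.lt_def])
        | i+1, j+1 =>
            exact Fin.succ_lt_succ_iff.mpr (hsm (Fin.mk_lt_mk.mpr
              (Nat.lt_of_succ_lt_succ (Fin.mk_lt_mk.mp hab))))
      · rintro ⟨a, ha⟩
        match a, ha with
        | 0, _ => exact hβγ
        | i+1, h => exact hval ⟨i, Nat.lt_of_succ_lt_succ h⟩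
      · rintro i h ⟨j, hj⟩ h1 h2
        match i, j with
        | 0, 0 => exact absurd h1 (lt_irrefl _)
        | 0, k+1 =>
            exact houter (by simpa using Nat.lt_of_succ_lt_succ h)
              ⟨k, Nat.lt_of_succ_lt_succ hj⟩
              (by simpa [Fin.lt_def] using Nat.lt_of_succ_lt_succ (Fin.mk_lt_mk.mp h2))
        | i+1, 0 => exact absurd h1 (by simp [Fin.lt_def])
        | i+1, k+1 =>
            exact hinner i (Nat.lt_of_succ_lt_succ h) ⟨k, Nat.lt_of_succ_lt_succ hj⟩
              (by simpa [Fin.lt_def] using Nat.lt_of_succ_lt_succ (Fin.mk_lt_mk.mp h1))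
              (by simpa [Fin.lt_def] using Nat.lt_of_succ_lt_succ (Fin.mk_lt_mk.mp h2))
      · rintro h ⟨j, hj⟩ hlt
        exact absurd hlt (by simp [Fin.lt_def])
  | skip hβγ hrec ih =>
      rename_i β γ s t _
      obtain ⟨f, hsm, hval, hinner, houter⟩ := ih
      refine ⟨fun i => (f i).succ, fun a b hab => Fin.succ_lt_succ_iff.mpr (hsm hab),
        fun i => hval i, ?_, ?_⟩
      · rintro i h ⟨j, hj⟩ h1 h2
        match j with
        | 0 => exact absurd h1 (by simp [Fin.lt_def])
        | k+1 =>
            exact hinner i h ⟨k, Nat.lt_of_succ_lt_succ hj⟩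
              (by simpa [Fin.lt_def] using Nat.lt_of_succ_lt_succ (Fin.mk_lt_mk.mp h1))
              (by simpa [Fin.lt_def] using Nat.lt_of_succ_lt_succ (Fin.mk_lt_mk.mp h2))
      · rintro h ⟨j, hj⟩ hlt
        match j with
        | 0 => exact hβγ
        | k+1 =>
            exact houter h ⟨k, Nat.lt_of_succ_lt_succ hj⟩
              (by simpa [Fin.lt_def] using Nat.lt_of_succ_lt_succ (Fin.mk_lt_mk.mp hlt))

/-- The realizer-based strong gap condition coincides with the recursive one. -/
theorem strongGap_iff_recGap {α : Type*} [LinearOrder α] [WellFoundedLT α]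
    (s t : List α) : StrongGap s t ↔ RecGap s t :=
  ⟨strongGap_recGap, recGap_strongGap⟩
end

section
/- For sequences s, t over a well order α with least element 0, the following are equivalent: (a) s ≤_w t; (b) ⟨0⟩*s ≤_s ⟨0⟩*t; (c) ⟨β⟩*s ≤_s ⟨γ⟩*t for all β ≤ γ in α such that β is less than or equal to every element of t. -/
section

variable {α : Type*} [LinearOrder α] {s t : List α} {β γ : α}

theorem WeakGap.of_strongGap_cons (h : StrongGap (β :: s) (γ :: t)) : WeakGap s t := by
  obtain ⟨g, hg_mono, hg_le, hg_gap, -⟩ := h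
  have hg_ne (i : Fin s.length) : g i.succ ≠ 0 :=
    ((Fin.zero_le _).trans_lt (hg_mono (Fin.succ_pos i))).ne'
  set f : Fin s.length → Fin t.length := fun i => (g i.succ).pred (hg_ne i)
  have hgf (i : Fin s.length) : g i.succ = (f i).succ := (Fin.succ_pred _ _).symm
  refine ⟨f, fun i j hij => ?_, fun i => ?_, fun i hi j hj₁ hj₂ => ?_⟩
  · rw [← Fin.succ_lt_succ_iff, ← hgf, ← hgf]
    exact hg_mono (Fin.succ_lt_succ_iff.2 hij)
  · simpa [hgf] using hg_le i.succ
  · exact hg_gap (i + 1) (Nat.succ_lt_succ hi) j.succ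
      ((hgf ⟨i, _⟩).trans_lt (Fin.succ_lt_succ_iff.2 hj₁))
      ((Fin.succ_lt_succ_iff.2 hj₂).trans_eq (hgf ⟨i + 1, hi⟩).symm)

theorem StrongGap.cons_of_weakGap (hβ : ∀ x ∈ γ :: t, β ≤ x) (h : WeakGap s t) :
    StrongGap (β :: s) (γ :: t) := by
  have hβ_get (j : Fin (γ :: t).length) : β ≤ (γ :: t).get j := hβ _ (List.get_mem _ j)
  cases s with
  | nil =>
    exact ⟨fun _ => ⟨0, Nat.succ_pos _⟩,
      @Subsingleton.strictMono _ _ _ _ Fin.subsingleton_one _, fun ⟨0, _⟩ => hβ_get _,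
      fun _ hi => absurd hi (by simp), fun _ j hj => absurd hj (Fin.not_lt_zero j)⟩
  | cons a s =>
    obtain ⟨f, hf_mono, hf_le, hf_gap⟩ := h
    -- `β` goes to the slot just before the image of `a`, so the inner gap in front of `a` is
    -- empty and the outer gap consists of entries of `γ :: t`, all bounded below by `β`.
    let g : Fin (s.length + 2) → Fin (t.length + 1) :=
      Fin.cons (f 0).castSucc fun i => (f i).succ
    refine ⟨g, ?_, ?_, ?_, ?_⟩
    · refine Fin.strictMono_iff_lt_succ.2 (Fin.cases ?_ fun i => ?_)
      · exact Fin.castSucc_lt_succ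
      · exact Fin.succ_lt_succ_iff.2 (hf_mono Fin.castSucc_lt_succ)
    · exact Fin.cases (hβ_get _) hf_le
    · rintro (_ | i) hi j hj₁ hj₂
      · exact absurd hj₂ (not_lt.2 (Fin.castSucc_lt_iff_succ_le.1 hj₁))
      · cases j using Fin.cases with
        | zero => exact absurd hj₁ (Fin.not_lt_zero _)
        | succ j =>
          exact hf_gap i (Nat.succ_lt_succ_iff.1 hi) j (Fin.succ_lt_succ_iff.1 hj₁)
            (Fin.succ_lt_succ_iff.1 hj₂)
    · exact fun _ j _ => hβ_get j

end

theorem weakGap_iff_strongGap_cons_general {α : Type*} [LinearOrder α] [OrderBot α]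
    (s t : List α) :
    (WeakGap s t ↔ StrongGap ((⊥ : α) :: s) ((⊥ : α) :: t)) ∧
    (WeakGap s t ↔
      ∀ β γ : α, β ≤ γ → (∀ x ∈ t, β ≤ x) → StrongGap (β :: s) (γ :: t)) :=
  ⟨⟨StrongGap.cons_of_weakGap fun _ _ => bot_le, WeakGap.of_strongGap_cons⟩,
    ⟨fun h _ _ hβγ hβt => StrongGap.cons_of_weakGap (List.forall_mem_cons.2 ⟨hβγ, hβt⟩) h,
      fun h => WeakGap.of_strongGap_cons (h ⊥ ⊥ le_rfl fun _ _ => bot_le)⟩⟩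

/-- Equivalence between the weak gap condition and strong gap conditions
with prepended heads. -/
theorem weakGap_iff_strongGap_cons {α : Type*} [LinearOrder α] [OrderBot α]
    [WellFoundedLT α] (s t : List α) :
    (WeakGap s t ↔ StrongGap ((⊥ : α) :: s) ((⊥ : α) :: t)) ∧
    (WeakGap s t ↔
      ∀ β γ : α, β ≤ γ → (∀ x ∈ t, β ≤ x) → StrongGap (β :: s) (γ :: t)) :=
  weakGap_iff_strongGap_cons_general s t
end

section
/- Let α be a well order. If s_l ≤_s t_l and s_r ≤_s t_r, and s_r is empty or begins with an element less than or equal to every element of t_l, then s_l * s_r ≤_s t_l * t_r. Similarly, if s_l ≤_w t_l and s_r ≤_s t_r with the same condition on s_r, then s_l * s_r ≤_w t_l * t_r. -/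
private theorem gap_concat_aux {α : Type*} [LinearOrder α]
    (sl sr tl tr : List α)
    (hhead : ∀ a, sr.head? = some a → ∀ b ∈ tl, a ≤ b)
    (fl : Fin sl.length → Fin tl.length)
    (hlmono : StrictMono fl)
    (hlle : ∀ i, sl.get i ≤ tl.get (fl i))
    (hlgap : ∀ (i : ℕ) (h : i + 1 < sl.length) (j : Fin tl.length),
      fl ⟨i, Nat.lt_of_succ_lt h⟩ < j → j < fl ⟨i + 1, h⟩ → sl.get ⟨i + 1, h⟩ ≤ tl.get j)
    (hr : StrongGap sr tr) :
    ∃ g : Fin (sl ++ sr).length → Fin (tl ++ tr).length,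
      StrictMono g ∧
      (∀ i, (sl ++ sr).get i ≤ (tl ++ tr).get (g i)) ∧
      (∀ (i : ℕ) (h : i + 1 < (sl ++ sr).length) (j : Fin (tl ++ tr).length),
        g ⟨i, Nat.lt_of_succ_lt h⟩ < j → j < g ⟨i + 1, h⟩ →
          (sl ++ sr).get ⟨i + 1, h⟩ ≤ (tl ++ tr).get j) ∧
      ((∀ (h : 0 < sl.length) (j : Fin tl.length), j < fl ⟨0, h⟩ → sl.get ⟨0, h⟩ ≤ tl.get j) →
        ∀ (h : 0 < (sl ++ sr).length) (j : Fin (tl ++ tr).length),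
          j < g ⟨0, h⟩ → (sl ++ sr).get ⟨0, h⟩ ≤ (tl ++ tr).get j) := by
  obtain ⟨fr, hrmono, hrle, hrgap, hrout⟩ := hr
  have hslt : ∀ i : Fin (sl ++ sr).length, (i : ℕ) < sl.length + sr.length := by
    intro i; have := i.isLt; simpa using this
  have htlt : ∀ j : Fin (tl ++ tr).length, (j : ℕ) < tl.length + tr.length := by
    intro j; have := j.isLt; simpa using this
  have hhead' : ∀ (h0 : 0 < sr.length), ∀ b ∈ tl, sr[0] ≤ b := by
    intro h0 b hb
    exact hhead sr[0]
      (by rw [List.head?_eq_getElem?, List.getElem?_eq_getElem h0]) b hb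
  refine ⟨fun i => if h : (i : ℕ) < sl.length then
      ⟨(fl ⟨(i : ℕ), h⟩ : Fin tl.length), by
        have := (fl ⟨(i : ℕ), h⟩).isLt
        simp only [List.length_append]; omega⟩
    else
      ⟨tl.length + (fr ⟨(i : ℕ) - sl.length, by have := hslt i; omega⟩ : Fin tr.length), by
        have := (fr ⟨(i : ℕ) - sl.length, by have := hslt i; omega⟩).isLt
        simp only [List.length_append]; omega⟩, ?_, ?_, ?_, ?_⟩
  · -- strict mono
    intro a b hab
    rw [Fin.lt_def] at hab
    dsimp only
    rcases lt_or_ge (a : ℕ) sl.length with ha | ha <;>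
      rcases lt_or_ge (b : ℕ) sl.length with hb | hb
    · rw [dif_pos ha, dif_pos hb, Fin.mk_lt_mk]
      exact hlmono (show (⟨(a : ℕ), ha⟩ : Fin sl.length) < ⟨(b : ℕ), hb⟩ from hab)
    · rw [dif_pos ha, dif_neg (not_lt.mpr hb), Fin.mk_lt_mk]
      have := (fl ⟨(a : ℕ), ha⟩).isLt
      omega
    · omega
    · rw [dif_neg (not_lt.mpr ha), dif_neg (not_lt.mpr hb), Fin.mk_lt_mk]
      exact Nat.add_lt_add_left (hrmono (Fin.mk_lt_mk.mpr (by omega))) tl.length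
  · -- pointwise ≤
    intro i
    simp only [List.get_eq_getElem]
    rcases lt_or_ge (i : ℕ) sl.length with hi | hi
    · rw [dif_pos hi]
      dsimp only
      rw [List.getElem_append_left hi, List.getElem_append_left (fl ⟨(i : ℕ), hi⟩).isLt]
      simpa using hlle ⟨(i : ℕ), hi⟩
    · rw [dif_neg (not_lt.mpr hi)]
      dsimp only
      rw [List.getElem_append_right hi, List.getElem_append_right (Nat.le_add_right _ _)]
      simp only [Nat.add_sub_cancel_left]
      simpa using hrle ⟨(i : ℕ) - sl.length, by have := hslt i; omega⟩
  · -- inner gap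
    intro i h j h1 h2
    have hlen : i + 1 < sl.length + sr.length := by simpa using h
    rw [Fin.lt_def] at h1 h2
    dsimp only at h1 h2
    simp only [List.get_eq_getElem]
    rcases lt_or_ge (i + 1) sl.length with hi1 | hi1
    · have hi : i < sl.length := by omega
      rw [dif_pos hi] at h1
      rw [dif_pos hi1] at h2
      dsimp only at h1 h2
      have hj : (j : ℕ) < tl.length := lt_trans h2 (fl ⟨i + 1, hi1⟩).isLt
      rw [List.getElem_append_left hi1, List.getElem_append_left hj]
      simpa using hlgap i hi1 ⟨(j : ℕ), hj⟩ h1 h2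
    · rw [dif_neg (not_lt.mpr hi1)] at h2
      dsimp only at h2
      rw [List.getElem_append_right hi1]
      rcases lt_or_ge i sl.length with hi | hi
      · -- i + 1 = sl.length
        have him : i + 1 - sl.length = 0 := by omega
        have h0 : 0 < sr.length := by omega
        have h2' : (j : ℕ) < tl.length + (fr ⟨0, h0⟩ : Fin tr.length).val := by
          simp only [him] at h2; exact h2
        simp only [him]
        rcases lt_or_ge (j : ℕ) tl.length with hjl | hjl
        · rw [List.getElem_append_left hjl]
          exact hhead' h0 _ (List.getElem_mem hjl)
        · rw [List.getElem_append_right hjl]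
          have hjr : (j : ℕ) - tl.length < tr.length := by have := htlt j; omega
          simpa using hrout h0 ⟨(j : ℕ) - tl.length, hjr⟩
            (by rw [Fin.lt_def]; dsimp only; omega)
      · -- both in the right part
        rw [dif_neg (not_lt.mpr hi)] at h1
        dsimp only at h1
        have hsucc : (i - sl.length) + 1 < sr.length := by omega
        have e1 : i + 1 - sl.length = (i - sl.length) + 1 := by omega
        have h1' : tl.length +
            (fr ⟨i - sl.length, Nat.lt_of_succ_lt hsucc⟩ : Fin tr.length).val < (j : ℕ) := h1
        have h2' : (j : ℕ) <
            tl.length + (fr ⟨(i - sl.length) + 1, hsucc⟩ : Fin tr.length).val := by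
          simp only [e1] at h2; exact h2
        have hjr : (j : ℕ) - tl.length < tr.length := by have := htlt j; omega
        have key := hrgap (i - sl.length) hsucc ⟨(j : ℕ) - tl.length, hjr⟩
          (by rw [Fin.lt_def]; dsimp only; omega)
          (by rw [Fin.lt_def]; dsimp only; omega)
        simp only [e1]
        rw [List.getElem_append_right (by omega : tl.length ≤ (j : ℕ))]
        simpa using key
  · -- outer gap
    intro hlout h j hj
    rw [Fin.lt_def] at hj
    dsimp only at hj
    simp only [List.get_eq_getElem]
    rcases lt_or_ge 0 sl.length with hm | hm
    · rw [dif_pos hm] at hj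
      dsimp only at hj
      have hjlt : (j : ℕ) < tl.length := lt_trans hj (fl ⟨0, hm⟩).isLt
      rw [List.getElem_append_left hm, List.getElem_append_left hjlt]
      simpa using hlout hm ⟨(j : ℕ), hjlt⟩ hj
    · have h0 : 0 < sr.length := by
        have := h; simp only [List.length_append] at this; omega
      rw [dif_neg (not_lt.mpr hm)] at hj
      dsimp only at hj
      have hz : 0 - sl.length = 0 := by omega
      have hj' : (j : ℕ) < tl.length + (fr ⟨0, h0⟩ : Fin tr.length).val := by
        simp only [hz] at hj; exact hj
      rw [List.getElem_append_right hm]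
      simp only [hz]
      rcases lt_or_ge (j : ℕ) tl.length with hjl | hjl
      · rw [List.getElem_append_left hjl]
        exact hhead' h0 _ (List.getElem_mem hjl)
      · rw [List.getElem_append_right hjl]
        have hjr : (j : ℕ) - tl.length < tr.length := by have := htlt j; omega
        simpa using hrout h0 ⟨(j : ℕ) - tl.length, hjr⟩
          (by rw [Fin.lt_def]; dsimp only; omega)

/-- Concatenation of gap relations, provided the right-hand left part starts
low enough. -/
theorem gap_concat {α : Type*} [LinearOrder α] [WellFoundedLT α]
    (sl sr tl tr : List α)
    (hhead : ∀ a, sr.head? = some a → ∀ b ∈ tl, a ≤ b) :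
    (StrongGap sl tl → StrongGap sr tr → StrongGap (sl ++ sr) (tl ++ tr)) ∧
    (WeakGap sl tl → StrongGap sr tr → WeakGap (sl ++ sr) (tl ++ tr)) := by
  constructor
  · rintro ⟨fl, hlmono, hlle, hlgap, hlout⟩ hr
    obtain ⟨g, hg1, hg2, hg3, hg4⟩ :=
      gap_concat_aux sl sr tl tr hhead fl hlmono hlle hlgap hr
    exact ⟨g, hg1, hg2, hg3, hg4 hlout⟩
  · rintro ⟨fl, hlmono, hlle, hlgap⟩ hr
    obtain ⟨g, hg1, hg2, hg3, _⟩ :=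
      gap_concat_aux sl sr tl tr hhead fl hlmono hlle hlgap hr
    exact ⟨g, hg1, hg2, hg3⟩
end

section
/- Let α be a well order. If s ≤_w t_l * t_r, then s can be split as s = s_l * s_r with s_l ≤_w t_l and s_r ≤_w t_r; moreover if s ≤_s t_l * t_r then one can choose the splitting so that s_l ≤_s t_l and s_r ≤_s t_r. -/
/-!
A witness `f` of `s ≤ tl ++ tr` is strictly increasing, so it sends an initial segment of `s`
into `tl` and the rest into `tr`; cutting `s` there, each piece inherits its inner gaps from
those of `s`. For the strong condition, the outer gap of the right piece is either the outer gap
of `s` (when the left piece is empty) or the inner gap of `s` at the cut.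
-/

section

variable {α : Type*} [LinearOrder α]

/-- The maps of `WeakGap`, re-indexed by `ℕ`; values of `f` beyond `s.length` are irrelevant. -/
structure IsGapMap (s t : List α) (f : ℕ → ℕ) : Prop where
  lt_length : ∀ i < s.length, f i < t.length
  strictMonoOn : StrictMonoOn f (Set.Iio s.length)
  le : ∀ i (hi : i < s.length), s[i] ≤ t[f i]'(lt_length i hi)
  gap : ∀ i (hi : i + 1 < s.length) j (hj : j < t.length), f i < j → j < f (i + 1) →
    s[i + 1] ≤ t[j]

def RespectsOuterGap (s t : List α) (f : ℕ → ℕ) : Prop :=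
  ∀ (hs : 0 < s.length) j (hj : j < t.length), j < f 0 → s[0] ≤ t[j]

section FinEncoding

variable {s t : List α} {F : Fin s.length → Fin t.length} {f : ℕ → ℕ}

theorem isGapMap_iff_of_eq (hF : ∀ i (hi : i < s.length), F ⟨i, hi⟩ = f i) :
    IsGapMap s t f ↔ StrictMono F ∧ (∀ i, s.get i ≤ t.get (F i)) ∧
      ∀ (i : ℕ) (h : i + 1 < s.length) (j : Fin t.length),
        F ⟨i, Nat.lt_of_succ_lt h⟩ < j → j < F ⟨i + 1, h⟩ → s.get ⟨i + 1, h⟩ ≤ t.get j := by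
  constructor
  · intro hf
    refine ⟨fun ⟨a, ha⟩ ⟨b, hb⟩ hab => ?_, fun ⟨i, hi⟩ => ?_, fun i h j h₁ h₂ => ?_⟩
    · rw [Fin.lt_def, hF, hF]
      exact hf.strictMonoOn ha hb hab
    · simpa only [List.get_eq_getElem, hF] using hf.le i hi
    · rw [Fin.lt_def, hF] at h₁ h₂
      exact hf.gap i h j j.2 h₁ h₂
  · rintro ⟨hmono, hle, hgap⟩
    refine ⟨fun i hi => hF i hi ▸ (F ⟨i, hi⟩).2, fun a ha b hb hab => ?_, fun i hi => ?_,
      fun i h j hj h₁ h₂ => ?_⟩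
    · rw [← hF a ha, ← hF b hb]
      exact hmono (Fin.mk_lt_mk.2 hab)
    · simpa only [List.get_eq_getElem, hF] using hle ⟨i, hi⟩
    · rw [← hF i (by omega)] at h₁
      rw [← hF (i + 1) h] at h₂
      exact hgap i h ⟨j, hj⟩ h₁ h₂

theorem respectsOuterGap_iff_of_eq (hF : ∀ i (hi : i < s.length), F ⟨i, hi⟩ = f i) :
    RespectsOuterGap s t f ↔
      ∀ (h : 0 < s.length) (j : Fin t.length), j < F ⟨0, h⟩ → s.get ⟨0, h⟩ ≤ t.get j := by
  constructor
  · intro ho h j hj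
    rw [Fin.lt_def, hF] at hj
    exact ho h j j.2 hj
  · intro ho h j hj hlt
    rw [← hF 0 h] at hlt
    exact ho h ⟨j, hj⟩ hlt

end FinEncoding

theorem weakGap_iff_exists_isGapMap {s t : List α} : WeakGap s t ↔ ∃ f, IsGapMap s t f := by
  constructor
  · rintro ⟨F, hF⟩
    let f : ℕ → ℕ := fun i => if hi : i < s.length then F ⟨i, hi⟩ else 0
    exact ⟨f, (isGapMap_iff_of_eq fun i hi => by simp only [f, dif_pos hi]).2 hF⟩
  · rintro ⟨f, hf⟩
    let F : Fin s.length → Fin t.length := fun i => ⟨f i, hf.lt_length i i.2⟩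
    exact ⟨F, (isGapMap_iff_of_eq fun _ _ => rfl).1 hf⟩

theorem strongGap_iff_exists_isGapMap {s t : List α} :
    StrongGap s t ↔ ∃ f, IsGapMap s t f ∧ RespectsOuterGap s t f := by
  constructor
  · rintro ⟨F, hmono, hle, hgap, ho⟩
    let f : ℕ → ℕ := fun i => if hi : i < s.length then F ⟨i, hi⟩ else 0
    have hF : ∀ i (hi : i < s.length), (F ⟨i, hi⟩ : ℕ) = f i := fun i hi => by
      simp only [f, dif_pos hi]
    exact ⟨f, (isGapMap_iff_of_eq hF).2 ⟨hmono, hle, hgap⟩, (respectsOuterGap_iff_of_eq hF).2 ho⟩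
  · rintro ⟨f, hf, ho⟩
    let F : Fin s.length → Fin t.length := fun i => ⟨f i, hf.lt_length i i.2⟩
    have hF : ∀ i (hi : i < s.length), (F ⟨i, hi⟩ : ℕ) = f i := fun _ _ => rfl
    obtain ⟨hmono, hle, hgap⟩ := (isGapMap_iff_of_eq hF).1 hf
    exact ⟨F, hmono, hle, hgap, (respectsOuterGap_iff_of_eq hF).1 ho⟩

theorem MonotoneOn.exists_threshold {f : ℕ → ℕ} {n : ℕ} (hf : MonotoneOn f (Set.Iio n)) (a : ℕ) :
    ∃ k, (∀ i < k, f i < a) ∧ ∀ i, k ≤ i → i < n → a ≤ f i := by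
  have hP : ∃ k, n ≤ k ∨ a ≤ f k := ⟨n, .inl le_rfl⟩
  refine ⟨Nat.find hP, fun i hi => ?_, fun i hki hin => ?_⟩
  · have := Nat.find_min hP hi
    push Not at this
    exact this.2
  · rcases Nat.find_spec hP with hn | hk
    · exact absurd (hki.trans_lt hin) hn.not_gt
    · exact hk.trans (hf (hki.trans_lt hin) hin hki)

section Split

variable {s tl tr : List α} {f : ℕ → ℕ} {k : ℕ}

theorem IsGapMap.take_of_append (hf : IsGapMap s (tl ++ tr) f) (hk : ∀ i < k, f i < tl.length) :
    IsGapMap (s.take k) tl f := by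
  have hlen : ∀ i, i < (s.take k).length → i < k ∧ i < s.length := fun i hi => by
    simpa using hi
  refine ⟨fun i hi => hk i (hlen i hi).1, hf.strictMonoOn.mono fun i hi => (hlen i hi).2,
    fun i hi => ?_, fun i hi j hj h₁ h₂ => ?_⟩
  · have := hf.le i (hlen i hi).2
    rwa [List.getElem_append_left (hk i (hlen i hi).1), ← List.getElem_take] at this
  · have := hf.gap i (hlen _ hi).2 j (by rw [List.length_append]; omega) h₁ h₂
    rwa [List.getElem_append_left hj, ← List.getElem_take] at this

theorem IsGapMap.drop_of_append (hf : IsGapMap s (tl ++ tr) f)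
    (hk : ∀ i, k ≤ i → i < s.length → tl.length ≤ f i) :
    IsGapMap (s.drop k) tr fun i => f (k + i) - tl.length := by
  have hlen : ∀ i, i < (s.drop k).length → k + i < s.length := fun i hi => by
    rw [List.length_drop] at hi
    omega
  refine ⟨fun i hi => ?_, fun a ha b hb hab => ?_, fun i hi => ?_, fun i hi j hj h₁ h₂ => ?_⟩
  · have hlt := hf.lt_length _ (hlen i hi)
    have hge := hk _ (by omega) (hlen i hi)
    rw [List.length_append] at hlt
    omega
  · have hlt := hf.strictMonoOn (hlen a ha) (hlen b hb) (Nat.add_lt_add_left hab k)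
    have hge := hk _ (by omega) (hlen a ha)
    omega
  · simpa only [List.getElem_drop, List.getElem_append_right (hk _ (by omega) (hlen i hi))]
      using hf.le _ (hlen i hi)
  · have hge := hk _ (by omega) (hlen i (by omega))
    rw [← Nat.add_assoc] at h₂
    have := hf.gap (k + i) (hlen _ hi) (tl.length + j) (by rw [List.length_append]; omega)
      (by omega) (by omega)
    simpa only [List.getElem_drop, List.getElem_append_right (Nat.le_add_right _ _),
      Nat.add_sub_cancel_left, Nat.add_assoc] using this

theorem RespectsOuterGap.take_of_append (ho : RespectsOuterGap s (tl ++ tr) f) :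
    RespectsOuterGap (s.take k) tl f := fun hs j hj hlt => by
  have := ho (by rw [List.length_take] at hs; omega) j (by rw [List.length_append]; omega) hlt
  rwa [List.getElem_append_left hj, ← List.getElem_take] at this

theorem IsGapMap.respectsOuterGap_drop_of_append (hf : IsGapMap s (tl ++ tr) f)
    (ho : RespectsOuterGap s (tl ++ tr) f) (hk : ∀ i < k, f i < tl.length) :
    RespectsOuterGap (s.drop k) tr fun i => f (k + i) - tl.length := by
  intro hs j hj hlt
  have hks : k < s.length := by rw [List.length_drop] at hs; omega
  have hj' : tl.length + j < (tl ++ tr).length := by rw [List.length_append]; omega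
  simp only [Nat.add_zero] at hlt
  have key : s[k] ≤ (tl ++ tr)[tl.length + j] := by
    rcases k with _ | i
    · exact ho hks _ hj' (by omega)
    · have := hk i (by omega)
      exact hf.gap i hks _ hj' (by omega) (by omega)
  simpa only [List.getElem_drop, Nat.add_zero, List.getElem_append_right (Nat.le_add_right _ _),
    Nat.add_sub_cancel_left] using key

end Split

end

theorem gap_split_general {α : Type*} [LinearOrder α]
    (s tl tr : List α) :
    (WeakGap s (tl ++ tr) →
      ∃ sl sr, s = sl ++ sr ∧ WeakGap sl tl ∧ WeakGap sr tr) ∧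
    (StrongGap s (tl ++ tr) →
      ∃ sl sr, s = sl ++ sr ∧ StrongGap sl tl ∧ StrongGap sr tr) := by
  simp only [weakGap_iff_exists_isGapMap, strongGap_iff_exists_isGapMap]
  constructor
  · rintro ⟨f, hf⟩
    obtain ⟨k, hlt, hge⟩ := hf.strictMonoOn.monotoneOn.exists_threshold tl.length
    exact ⟨s.take k, s.drop k, (List.take_append_drop k s).symm,
      ⟨f, hf.take_of_append hlt⟩, ⟨_, hf.drop_of_append hge⟩⟩
  · rintro ⟨f, hf, ho⟩
    obtain ⟨k, hlt, hge⟩ := hf.strictMonoOn.monotoneOn.exists_threshold tl.length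
    exact ⟨s.take k, s.drop k, (List.take_append_drop k s).symm,
      ⟨f, hf.take_of_append hlt, ho.take_of_append⟩,
      ⟨_, hf.drop_of_append hge, hf.respectsOuterGap_drop_of_append ho hlt⟩⟩

/-- Splitting a gap relation along a concatenation of the right-hand side. -/
theorem gap_split {α : Type*} [LinearOrder α] [WellFoundedLT α]
    (s tl tr : List α) :
    (WeakGap s (tl ++ tr) →
      ∃ sl sr, s = sl ++ sr ∧ WeakGap sl tl ∧ WeakGap sr tr) ∧
    (StrongGap s (tl ++ tr) →
      ∃ sl sr, s = sl ++ sr ∧ StrongGap sl tl ∧ StrongGap sr tr) :=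
  gap_split_general s tl tr
end

section
/- Let α be a well order and let s_l, s_r, t_l, t_r be finite sequences over α such that t_r is empty or begins with an element strictly below all elements of s_l. Then s_l * s_r ≤_s t_l * t_r implies s_l ≤_s t_l. -/
section

variable {α : Type*} [LinearOrder α]

def IsStrongGapEmbedding (s t : List α) (f : Fin s.length → Fin t.length) : Prop :=
  StrictMono f ∧
    (∀ i, s.get i ≤ t.get (f i)) ∧
    (∀ (i : ℕ) (h : i + 1 < s.length) (j : Fin t.length),
      f ⟨i, Nat.lt_of_succ_lt h⟩ < j → j < f ⟨i + 1, h⟩ →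
        s.get ⟨i + 1, h⟩ ≤ t.get j) ∧
    ∀ (h : 0 < s.length) (j : Fin t.length), j < f ⟨0, h⟩ → s.get ⟨0, h⟩ ≤ t.get j

namespace IsStrongGapEmbedding

variable {s t : List α} {f : Fin s.length → Fin t.length}

/-- The three gap conditions in one: `j` ranges over the gap `(f (m - 1), f m]`, read as
`[0, f 0]` when `m = 0`. -/
theorem get_le_of_mem_gap (hf : IsStrongGapEmbedding s t f) (m : Fin s.length)
    (j : Fin t.length) (hjm : j ≤ f m) (hprev : ∀ k < m, f k < j) : s.get m ≤ t.get j := by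
  obtain ⟨-, hle, hgap, houter⟩ := hf
  obtain rfl | hjm := eq_or_lt_of_le hjm
  · exact hle m
  obtain ⟨_ | k, hm⟩ := m
  · exact houter hm j hjm
  · exact hgap k hm j (hprev _ (Fin.mk_lt_mk.2 k.lt_succ_self)) hjm

/-- The least index of `sl` sent into `tr` would have the head of `tr` in its gap. -/
theorem lt_length_of_head_lt {sl sr tl tr : List α}
    {f : Fin (sl ++ sr).length → Fin (tl ++ tr).length}
    (hf : IsStrongGapEmbedding (sl ++ sr) (tl ++ tr) f)
    (hhead : ∀ a, tr.head? = some a → ∀ b ∈ sl, a < b) :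
    ∀ m : Fin (sl ++ sr).length, (m : ℕ) < sl.length → (f m : ℕ) < tl.length := by
  intro m
  induction m using WellFoundedLT.induction with
  | _ m ih =>
    intro hm
    by_contra! hfm
    have htr : tl.length < (tl ++ tr).length := hfm.trans_lt (f m).isLt
    have htr_ne : tr ≠ [] := List.ne_nil_of_length_pos (by simpa using htr)
    have hs : (sl ++ sr).get m = sl[(m : ℕ)] := by simp [List.getElem_append_left hm]
    have ht : (tl ++ tr).get ⟨tl.length, htr⟩ = tr.head htr_ne := by
      simp [List.getElem_append_right le_rfl, List.head_eq_getElem]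
    have hgap := hf.get_le_of_mem_gap m ⟨tl.length, htr⟩ hfm
      fun k hk => ih k hk (Nat.lt_trans hk hm)
    rw [hs, ht] at hgap
    exact hgap.not_gt <| hhead _ (List.head?_eq_some_head _) _ (List.getElem_mem _)

theorem strongGap_of_append {s s' t t' : List α}
    {f : Fin (s ++ s').length → Fin (t ++ t').length}
    (hf : IsStrongGapEmbedding (s ++ s') (t ++ t') f)
    (hmaps : ∀ m : Fin (s ++ s').length, (m : ℕ) < s.length → (f m : ℕ) < t.length) :
    StrongGap s t := by
  have hs : s.length ≤ (s ++ s').length := by simp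
  have ht : t.length ≤ (t ++ t').length := by simp
  obtain ⟨hmono, hle, hgap, houter⟩ := hf
  refine ⟨fun i => (f (i.castLE hs)).castLT (hmaps (i.castLE hs) i.isLt),
    fun i j hij => hmono hij, fun i => ?_, fun i hi j h₁ h₂ => ?_, fun hi j hj => ?_⟩
  · simpa [List.getElem_append_left i.isLt,
      List.getElem_append_left (hmaps (i.castLE hs) i.isLt)] using hle (i.castLE hs)
  · simpa [List.getElem_append_left hi, List.getElem_append_left j.isLt]
      using hgap i (hi.trans_le hs) (j.castLE ht) h₁ h₂
  · simpa [List.getElem_append_left hi, List.getElem_append_left j.isLt]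
      using houter (hi.trans_le hs) (j.castLE ht) hj

end IsStrongGapEmbedding

end

theorem strongGap_remove_tail_general {α : Type*} [LinearOrder α]
    (sl sr tl tr : List α)
    (hhead : ∀ a, tr.head? = some a → ∀ b ∈ sl, a < b) :
    StrongGap (sl ++ sr) (tl ++ tr) → StrongGap sl tl := by
  rintro ⟨f, hf : IsStrongGapEmbedding _ _ f⟩
  exact hf.strongGap_of_append (hf.lt_length_of_head_lt hhead)

/-- Removing the tails of a strong gap relation. -/
theorem strongGap_remove_tail {α : Type*} [LinearOrder α] [WellFoundedLT α]
    (sl sr tl tr : List α)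
    (hhead : ∀ a, tr.head? = some a → ∀ b ∈ sl, a < b) :
    StrongGap (sl ++ sr) (tl ++ tr) → StrongGap sl tl :=
  strongGap_remove_tail_general sl sr tl tr hhead
end

section
/- Let α be a well order and s, t, u finite sequences over α. Then u * s ≤_w u * t implies s ≤_w t (left cancellation for the weak gap condition). -/
/-!
A weak gap embedding `f` of `u ++ s` into `u ++ t` is strictly increasing, so `i ≤ f i`; hence
it maps the block `s` into the block `t`, and shifting indices back by `|u|` gives a weak gap
embedding of `s` into `t`. The gap conditions transfer because the gaps of the shifted map
are shifted gaps of `f`.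
-/

theorem Fin.val_le_val_of_strictMono {n m : ℕ} {f : Fin n → Fin m} (hf : StrictMono f)
    (i : Fin n) : (i : ℕ) ≤ f i := by
  obtain ⟨k, hk⟩ := i
  induction k with
  | zero => exact Nat.zero_le _
  | succ k ih =>
    have hstep : f ⟨k, Nat.lt_of_succ_lt hk⟩ < f ⟨k + 1, hk⟩ := hf (Fin.mk_lt_mk.2 k.lt_succ_self)
    exact Nat.succ_le_of_lt ((ih _).trans_lt hstep)

theorem List.getElem_length_add_append {α : Type*} (u s : List α) (i : ℕ)
    (h : u.length + i < (u ++ s).length) :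
    (u ++ s)[u.length + i] = s[i]'(by simp at h; omega) := by
  rw [List.getElem_append_right (Nat.le_add_right _ _)]
  simp

theorem WeakGap.of_append {α : Type*} [LinearOrder α] {u s v t : List α}
    {f : Fin (u ++ s).length → Fin (v ++ t).length}
    (hmono : StrictMono f) (hle : ∀ i, (u ++ s).get i ≤ (v ++ t).get (f i))
    (hgap : ∀ (i : ℕ) (h : i + 1 < (u ++ s).length) (j : Fin (v ++ t).length),
      f ⟨i, Nat.lt_of_succ_lt h⟩ < j → j < f ⟨i + 1, h⟩ →
        (u ++ s).get ⟨i + 1, h⟩ ≤ (v ++ t).get j)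
    (hblock : ∀ (i : ℕ) (h : u.length + i < (u ++ s).length), v.length ≤ f ⟨u.length + i, h⟩) :
    WeakGap s t := by
  have hus : (u ++ s).length = u.length + s.length := List.length_append
  have hvt : (v ++ t).length = v.length + t.length := List.length_append
  have hshift : ∀ i : Fin s.length, u.length + i < (u ++ s).length := fun i => by omega
  obtain ⟨g, hg⟩ : ∃ g : Fin s.length → Fin t.length,
      ∀ i, v.length + g i = f ⟨u.length + i, hshift i⟩ := by
    refine ⟨fun i => ⟨f ⟨u.length + i, hshift i⟩ - v.length, ?_⟩, fun i => ?_⟩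
    · have := (f ⟨u.length + i, hshift i⟩).isLt
      have := hblock i (hshift i)
      omega
    · have := hblock i (hshift i)
      simp only
      omega
  refine ⟨g, fun i j hij => ?_, fun i => ?_, fun i h j hlo hhi => ?_⟩
  · have := @hmono ⟨_, hshift i⟩ ⟨_, hshift j⟩ (Fin.mk_lt_mk.2 (Nat.add_lt_add_left hij _))
    rw [Fin.lt_def, ← hg, ← hg] at this
    omega
  · calc s[i] = (u ++ s)[u.length + i] := (List.getElem_length_add_append ..).symm
      _ ≤ (v ++ t)[(f ⟨u.length + i, hshift i⟩ : ℕ)] := hle ⟨u.length + i, hshift i⟩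
      _ = t[g i] := by simp only [← hg i, List.getElem_length_add_append]; rfl
  · have hlo' : v.length + g ⟨i, _⟩ = f ⟨u.length + i, by omega⟩ := hg ⟨i, Nat.lt_of_succ_lt h⟩
    have hhi' : v.length + g ⟨i + 1, h⟩ = f ⟨u.length + i + 1, by omega⟩ := hg ⟨i + 1, h⟩
    rw [Fin.lt_def] at hlo hhi
    have key := hgap (u.length + i) (by omega) ⟨v.length + j, by omega⟩
      (show (f _ : ℕ) < v.length + j by omega) (show v.length + j < (f _ : ℕ) by omega)
    calc s[i + 1] = (u ++ s)[u.length + (i + 1)] := (List.getElem_length_add_append ..).symm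
      _ ≤ (v ++ t)[v.length + j] := key
      _ = t[j] := List.getElem_length_add_append ..

theorem weakGap_remove_head_general {α : Type*} [LinearOrder α]
    (s t u : List α) :
    WeakGap (u ++ s) (u ++ t) → WeakGap s t := by
  rintro ⟨f, hmono, hle, hgap⟩
  exact WeakGap.of_append hmono hle hgap fun i h =>
    (Nat.le_add_right _ _).trans (Fin.val_le_val_of_strictMono hmono ⟨u.length + i, h⟩)

/-- Left cancellation for the weak gap condition. -/
theorem weakGap_remove_head {α : Type*} [LinearOrder α] [WellFoundedLT α]
    (s t u : List α) :
    WeakGap (u ++ s) (u ++ t) → WeakGap s t :=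
  weakGap_remove_head_general s t u
end

section
/- For any well order α there is a quasi-embedding from the order S^s_α of sequences over α with the strong gap condition into the order S^w_{α+1} of sequences over α+1 with the weak gap condition, given by s ↦ ⟨⊤⟩ * s where ⊤ is the top element of α+1. -/
private theorem helper {α : Type*} [LinearOrder α] (s t : List α) :
    WeakGap ((⊤ : WithTop α) :: s.map ((↑) : α → WithTop α))
      ((⊤ : WithTop α) :: t.map ((↑) : α → WithTop α)) → StrongGap s t := by
  rintro ⟨f, hmono, hle, hgap⟩
  have hsl : ((⊤ : WithTop α) :: s.map ((↑) : α → WithTop α)).length = s.length + 1 := by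
    simp
  have htl : ((⊤ : WithTop α) :: t.map ((↑) : α → WithTop α)).length = t.length + 1 := by
    simp
  have h0s : 0 < ((⊤ : WithTop α) :: s.map ((↑) : α → WithTop α)).length := by simp
  have Hs : ∀ k, k < s.length →
      k + 1 < ((⊤ : WithTop α) :: s.map ((↑) : α → WithTop α)).length := by
    intro k hk; rw [hsl]; omega
  have sget : ∀ (k : ℕ) (hk : k < s.length),
      ((⊤ : WithTop α) :: s.map ((↑) : α → WithTop α)).get ⟨k + 1, Hs k hk⟩
        = ↑(s.get ⟨k, hk⟩) := by
    intro k hk; simp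
  have tget : ∀ (k : ℕ) (hk : k < t.length)
      (h : k + 1 < ((⊤ : WithTop α) :: t.map ((↑) : α → WithTop α)).length),
      ((⊤ : WithTop α) :: t.map ((↑) : α → WithTop α)).get ⟨k + 1, h⟩
        = ↑(t.get ⟨k, hk⟩) := by
    intro k hk h; simp
  have hf0 : (f ⟨0, h0s⟩).val = 0 := by
    by_contra hne
    have hle0 : (⊤ : WithTop α) ≤
        ((⊤ : WithTop α) :: t.map ((↑) : α → WithTop α)).get (f ⟨0, h0s⟩) := by
      simpa using hle ⟨0, h0s⟩
    have htop := top_le_iff.mp hle0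
    have hlt := (f ⟨0, h0s⟩).isLt
    obtain ⟨k, hk⟩ : ∃ k, (f ⟨0, h0s⟩).val = k + 1 := ⟨(f ⟨0, h0s⟩).val - 1, by omega⟩
    have hkt : k < t.length := by omega
    have heq : f ⟨0, h0s⟩ = ⟨k + 1, by omega⟩ := Fin.ext hk
    rw [heq, tget k hkt] at htop
    exact WithTop.coe_ne_top htop
  have hpos : ∀ k (hk : k < s.length), 0 < (f ⟨k + 1, Hs k hk⟩).val := by
    intro k hk
    have h1 : f ⟨0, h0s⟩ < f ⟨k + 1, Hs k hk⟩ := hmono (Fin.lt_def.mpr (Nat.succ_pos k))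
    have h2 := Fin.lt_def.mp h1
    omega
  have hbd : ∀ k (hk : k < s.length), (f ⟨k + 1, Hs k hk⟩).val - 1 < t.length := by
    intro k hk
    have h1 := (f ⟨k + 1, Hs k hk⟩).isLt
    have h2 := hpos k hk
    omega
  refine ⟨fun i => ⟨(f ⟨i.val + 1, Hs i.val i.isLt⟩).val - 1, hbd i.val i.isLt⟩, ?_, ?_, ?_, ?_⟩
  · intro i j hij
    show (f ⟨i.val + 1, Hs i.val i.isLt⟩).val - 1 < (f ⟨j.val + 1, Hs j.val j.isLt⟩).val - 1
    have h1 : f ⟨i.val + 1, Hs i.val i.isLt⟩ < f ⟨j.val + 1, Hs j.val j.isLt⟩ :=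
      hmono (Fin.lt_def.mpr (Nat.succ_lt_succ (Fin.lt_def.mp hij)))
    have h2 := Fin.lt_def.mp h1
    have h3 := hpos i.val i.isLt
    omega
  · intro i
    have h1 := hle ⟨i.val + 1, Hs i.val i.isLt⟩
    rw [sget i.val i.isLt] at h1
    have h2 := hpos i.val i.isLt
    have h3 := hbd i.val i.isLt
    have h4 := (f ⟨i.val + 1, Hs i.val i.isLt⟩).isLt
    have heq : f ⟨i.val + 1, Hs i.val i.isLt⟩ =
        ⟨((f ⟨i.val + 1, Hs i.val i.isLt⟩).val - 1) + 1, by omega⟩ :=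
      Fin.ext (show (f ⟨i.val + 1, Hs i.val i.isLt⟩).val =
        (f ⟨i.val + 1, Hs i.val i.isLt⟩).val - 1 + 1 by omega)
    rw [heq, tget _ h3] at h1
    exact WithTop.coe_le_coe.mp h1
  · intro i h j hj1 hj2
    have hjlt : j.val + 1 <
        ((⊤ : WithTop α) :: t.map ((↑) : α → WithTop α)).length := by
      rw [htl]; omega
    have hj1' : (f ⟨i + 1, Nat.lt_of_succ_lt (Hs (i + 1) h)⟩).val - 1 < j.val := hj1
    have hj2' : j.val < (f ⟨i + 1 + 1, Hs (i + 1) h⟩).val - 1 := hj2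
    have p1 : 0 < (f ⟨i + 1, Nat.lt_of_succ_lt (Hs (i + 1) h)⟩).val :=
      hpos i (Nat.lt_of_succ_lt h)
    have p2 : 0 < (f ⟨i + 1 + 1, Hs (i + 1) h⟩).val := hpos (i + 1) h
    have key := hgap (i + 1) (Hs (i + 1) h) ⟨j.val + 1, hjlt⟩
      (Fin.lt_def.mpr (show (f ⟨i + 1, Nat.lt_of_succ_lt (Hs (i + 1) h)⟩).val < j.val + 1
        by omega))
      (Fin.lt_def.mpr (show j.val + 1 < (f ⟨i + 1 + 1, Hs (i + 1) h⟩).val by omega))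
    rw [sget (i + 1) h, tget j.val j.isLt] at key
    exact WithTop.coe_le_coe.mp key
  · intro h j hj
    have hjlt : j.val + 1 <
        ((⊤ : WithTop α) :: t.map ((↑) : α → WithTop α)).length := by
      rw [htl]; omega
    have hj' : j.val < (f ⟨0 + 1, Hs 0 h⟩).val - 1 := hj
    have hf0' : (f ⟨0, Nat.lt_of_succ_lt (Hs 0 h)⟩).val = 0 := hf0
    have p1 : 0 < (f ⟨0 + 1, Hs 0 h⟩).val := hpos 0 h
    have key := hgap 0 (Hs 0 h) ⟨j.val + 1, hjlt⟩
      (Fin.lt_def.mpr (show (f ⟨0, Nat.lt_of_succ_lt (Hs 0 h)⟩).val < j.val + 1 by omega))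
      (Fin.lt_def.mpr (show j.val + 1 < (f ⟨0 + 1, Hs 0 h⟩).val by omega))
    rw [sget 0 h, tget j.val j.isLt] at key
    exact WithTop.coe_le_coe.mp key

/-- The map `s ↦ ⟨⊤⟩ * s` is a quasi-embedding from sequences over `α` with the
strong gap condition into sequences over `α + 1` with the weak gap condition. -/
theorem strongGap_quasiEmbeds_into_weakGap_succ {α : Type*} [LinearOrder α]
    [WellFoundedLT α] (s t : List α) :
    WeakGap ((⊤ : WithTop α) :: s.map (↑·)) ((⊤ : WithTop α) :: t.map (↑·)) →
      StrongGap s t := by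
  have e : ∀ (l : List α), (l.map (↑·) : List (WithTop α)) = l.map ((↑) : α → WithTop α) := by
    intro l
    induction l with
    | nil => rfl
    | cons a l ih => simpa using ih
  intro hw
  rw [e s, e t] at hw
  exact helper s t hw
end

section
/- For any well order α there is a quasi-embedding from S^w_α, the finite sequences over α with the weak gap condition, into B^l_{α,1}, the binary trees with weakly ascending inner labels from α that ascend strictly on left subtrees and a single leaf label. The map sends a nonempty sequence to the tree whose root is the first occurrence of the minimal member, with left and right subtrees obtained recursively from the corresponding subsequences. -/
/-- Binary trees with inner labels in `α` and a single leaf label. -/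
inductive BTree (α : Type*) where
  | leaf : BTree α
  | node (b : α) (l r : BTree α) : BTree α

/-- The infimum-preserving embeddability relation on binary trees. -/
inductive BTree.Le {α : Type*} [LinearOrder α] : BTree α → BTree α → Prop
  | leaf : BTree.Le .leaf .leaf
  | left {s : BTree α} {γ : α} {tl tr : BTree α} :
      BTree.Le s tl → BTree.Le s (.node γ tl tr)
  | right {s : BTree α} {γ : α} {tl tr : BTree α} :
      BTree.Le s tr → BTree.Le s (.node γ tl tr)
  | node {β γ : α} {sl sr tl tr : BTree α} :
      β ≤ γ → BTree.Le sl tl → BTree.Le sr tr →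
        BTree.Le (.node β sl sr) (.node γ tl tr)

/-- The list of inner labels of a binary tree. -/
def BTree.innerLabels {α : Type*} : BTree α → List α
  | .leaf => []
  | .node b l r => b :: (l.innerLabels ++ r.innerLabels)

/-- Trees with weakly ascending inner labels which ascend strictly on left
subtrees (the trees of `B^l`). -/
def BTree.IsBl {α : Type*} [LinearOrder α] : BTree α → Prop
  | .leaf => True
  | .node b l r =>
      (∀ x ∈ l.innerLabels, b < x) ∧ (∀ x ∈ r.innerLabels, b ≤ x) ∧
        l.IsBl ∧ r.IsBl

section

variable {α : Type*} [LinearOrder α]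

namespace List

theorem eq_takeWhile_append_min_cons_tail {s : List α} (hs : s ≠ []) :
    s = s.takeWhile (s.min hs < ·) ++ s.min hs :: (s.dropWhile (s.min hs < ·)).tail := by
  have hdrop : s.dropWhile (s.min hs < ·) ≠ [] := fun h => by
    simpa using dropWhile_eq_nil_iff.mp h _ (min_mem hs)
  have hhead : (s.dropWhile (s.min hs < ·)).head hdrop = s.min hs := by
    refine le_antisymm ?_ (min_le_of_mem ((dropWhile_sublist _).subset (head_mem hdrop)))
    simpa using head_dropWhile_not (s.min hs < ·) hdrop
  conv_lhs => rw [← takeWhile_append_dropWhile (l := s) (p := (s.min hs < ·)),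
    ← cons_head_tail hdrop]
  rw [hhead]

theorem exists_eq_append_cons_lt_le {s : List α} (hs : s ≠ []) :
    ∃ sl b sr, s = sl ++ b :: sr ∧ (∀ x ∈ sl, b < x) ∧ (∀ x ∈ sr, b ≤ x) := by
  refine ⟨_, _, _, eq_takeWhile_append_min_cons_tail hs, fun x hx => ?_, fun x hx => ?_⟩
  · simpa using mem_takeWhile_imp hx
  · exact min_le_of_mem ((dropWhile_sublist _).subset (mem_of_mem_tail hx))

theorem min_eq_of_eq_append_cons {s sl sr : List α} {b : α} (hs : s ≠ [])
    (h : s = sl ++ b :: sr) (hl : ∀ x ∈ sl, b < x) (hr : ∀ x ∈ sr, b ≤ x) : s.min hs = b := by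
  subst h
  refine (min_eq_iff hs).2 ⟨by simp, fun x hx => ?_⟩
  simp only [mem_append, mem_cons] at hx
  rcases hx with hx | rfl | hx
  exacts [(hl x hx).le, le_rfl, hr x hx]

theorem induction_on_append_cons_lt_le {motive : List α → Prop} (nil : motive [])
    (append_cons : ∀ sl b sr, (∀ x ∈ sl, b < x) → (∀ x ∈ sr, b ≤ x) →
      motive sl → motive sr → motive (sl ++ b :: sr)) :
    ∀ s, motive s
  | [] => nil
  | a :: l => by
    obtain ⟨sl, b, sr, hs, hl, hr⟩ := exists_eq_append_cons_lt_le (cons_ne_nil a l)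
    rw [hs]
    exact append_cons sl b sr hl hr (induction_on_append_cons_lt_le nil append_cons sl)
      (induction_on_append_cons_lt_le nil append_cons sr)
termination_by s => s.length
decreasing_by
  all_goals
    have hlen := congrArg length hs
    simp only [length_cons, length_append] at hlen ⊢
    omega

end List

def minSplitTree : List α → BTree α
  | [] => .leaf
  | a :: l =>
    let b := (a :: l).min (List.cons_ne_nil a l)
    .node b (minSplitTree ((a :: l).takeWhile (b < ·)))
      (minSplitTree ((a :: l).dropWhile (b < ·)).tail)
termination_by s => s.length
decreasing_by
  all_goals
    have h := congrArg List.length (List.eq_takeWhile_append_min_cons_tail (List.cons_ne_nil a l))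
    simp only [List.length_append, List.length_cons] at h ⊢
    omega

theorem minSplitTree_nil : minSplitTree ([] : List α) = .leaf := by
  rw [minSplitTree]

theorem minSplitTree_eq_leaf_iff {s : List α} : minSplitTree s = .leaf ↔ s = [] := by
  cases s with
  | nil => simp [minSplitTree_nil]
  | cons a l => simp [minSplitTree]

theorem minSplitTree_append_cons {sl sr : List α} {b : α} (hl : ∀ x ∈ sl, b < x)
    (hr : ∀ x ∈ sr, b ≤ x) :
    minSplitTree (sl ++ b :: sr) = .node b (minSplitTree sl) (minSplitTree sr) := by
  obtain ⟨a, l, hal⟩ : ∃ a l, sl ++ b :: sr = a :: l := by cases sl <;> exact ⟨_, _, rfl⟩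
  rw [hal, minSplitTree, List.min_eq_of_eq_append_cons _ hal.symm hl hr, ← hal,
    List.takeWhile_append_of_pos (by simpa using hl),
    List.dropWhile_append_of_pos (by simpa using hl)]
  simp

theorem mem_innerLabels_minSplitTree {s : List α} {x : α} :
    x ∈ (minSplitTree s).innerLabels ↔ x ∈ s := by
  induction s using List.induction_on_append_cons_lt_le with
  | nil => simp [minSplitTree_nil, BTree.innerLabels]
  | append_cons sl b sr hl hr ihl ihr =>
    simp [minSplitTree_append_cons hl hr, BTree.innerLabels, ihl, ihr, or_left_comm]

theorem isBl_minSplitTree (s : List α) : (minSplitTree s).IsBl := by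
  induction s using List.induction_on_append_cons_lt_le with
  | nil => simp [minSplitTree_nil, BTree.IsBl]
  | append_cons sl b sr hl hr ihl ihr =>
    rw [minSplitTree_append_cons hl hr]
    exact ⟨fun x hx => hl x (mem_innerLabels_minSplitTree.1 hx),
      fun x hx => hr x (mem_innerLabels_minSplitTree.1 hx), ihl, ihr⟩

theorem BTree.le_leaf_iff {S : BTree α} : S.Le .leaf ↔ S = .leaf :=
  ⟨fun h => by cases h; rfl, fun h => h ▸ .leaf⟩

theorem BTree.le_node_iff {S l r : BTree α} {c : α} :
    S.Le (.node c l r) ↔ S.Le l ∨ S.Le r ∨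
      ∃ b Sl Sr, S = .node b Sl Sr ∧ b ≤ c ∧ Sl.Le l ∧ Sr.Le r := by
  constructor
  · rintro (_ | h | h | ⟨hbc, hl, hr⟩)
    exacts [.inl h, .inr (.inl h), .inr (.inr ⟨_, _, _, rfl, hbc, hl, hr⟩)]
  · rintro (h | h | ⟨b, Sl, Sr, rfl, hbc, hl, hr⟩)
    exacts [.left h, .right h, .node hbc hl hr]

theorem StrongGap.nil (t : List α) : StrongGap [] t :=
  ⟨Fin.elim0, fun i => i.elim0, fun i => i.elim0, fun i h => by simp at h, fun h => by simp at h⟩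

theorem StrongGap.cons {a b : α} {s t : List α} (hab : a ≤ b) (h : StrongGap s t) :
    StrongGap (a :: s) (b :: t) := by
  obtain ⟨f, hf, hle, hgap, houter⟩ := h
  refine ⟨Fin.cons 0 (Fin.succ ∘ f), ?_, ?_, ?_, fun _ j hj => absurd hj (Fin.not_lt_zero j)⟩
  · exact Fin.strictMono_cons.2 ⟨fun _ => Fin.succ_pos _, Fin.strictMono_succ.comp hf⟩
  · exact Fin.cases hab fun i => by simpa using hle i
  · rintro (_ | i) hi j hj₁ hj₂ <;> obtain ⟨j, rfl⟩ := Fin.exists_succ_eq.2 (Fin.ne_zero_of_lt hj₁)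
    · simpa using houter _ j (Fin.succ_lt_succ_iff.1 hj₂)
    · simpa using hgap i _ j (Fin.succ_lt_succ_iff.1 hj₁) (Fin.succ_lt_succ_iff.1 hj₂)

theorem StrongGap.skip {a b : α} {s t : List α} (hab : a ≤ b) (h : StrongGap (a :: s) t) :
    StrongGap (a :: s) (b :: t) := by
  obtain ⟨f, hf, hle, hgap, houter⟩ := h
  refine ⟨Fin.succ ∘ f, Fin.strictMono_succ.comp hf, fun i => by simpa using hle i, ?_, ?_⟩
  · intro i hi j hj₁ hj₂
    obtain ⟨j, rfl⟩ := Fin.exists_succ_eq.2 (Fin.ne_zero_of_lt hj₁)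
    simpa using hgap i hi j (Fin.succ_lt_succ_iff.1 hj₁) (Fin.succ_lt_succ_iff.1 hj₂)
  · exact fun h0 => Fin.cases (fun _ => hab) fun j hj => by
      simpa using houter h0 j (Fin.succ_lt_succ_iff.1 hj)

theorem StrongGap.weakGap {s t : List α} (h : StrongGap s t) : WeakGap s t :=
  let ⟨f, hf, hle, hgap, _⟩ := h
  ⟨f, hf, hle, hgap⟩

theorem WeakGap.cons {s t : List α} (b : α) (h : WeakGap s t) : WeakGap s (b :: t) := by
  obtain ⟨f, hf, hle, hgap⟩ := h
  refine ⟨Fin.succ ∘ f, Fin.strictMono_succ.comp hf, fun i => by simpa using hle i, ?_⟩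
  intro i hi j hj₁ hj₂
  obtain ⟨j, rfl⟩ := Fin.exists_succ_eq.2 (Fin.ne_zero_of_lt hj₁)
  simpa using hgap i hi j (Fin.succ_lt_succ_iff.1 hj₁) (Fin.succ_lt_succ_iff.1 hj₂)

theorem WeakGap.append_left {s t : List α} (u : List α) (h : WeakGap s t) : WeakGap s (u ++ t) := by
  induction u with
  | nil => exact h
  | cons b u ih => exact ih.cons b

/-- The strong gap embeddings, built letter by letter: `skip` passes over a letter of the target
that is at least the next letter of the source still to be matched. -/
inductive StrongGapEmbeds : List α → List α → Prop
  | nil (t : List α) : StrongGapEmbeds [] t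
  | cons {a b : α} {s t : List α} : a ≤ b → StrongGapEmbeds s t → StrongGapEmbeds (a :: s) (b :: t)
  | skip {a b : α} {s t : List α} :
      a ≤ b → StrongGapEmbeds (a :: s) t → StrongGapEmbeds (a :: s) (b :: t)

namespace StrongGapEmbeds

theorem strongGap {s t : List α} (h : StrongGapEmbeds s t) : StrongGap s t := by
  induction h with
  | nil t => exact .nil t
  | cons hab _ ih => exact ih.cons hab
  | skip hab _ ih => exact ih.skip hab

theorem append_right {s t : List α} (h : StrongGapEmbeds s t) (u : List α) :
    StrongGapEmbeds s (t ++ u) := by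
  induction h with
  | nil t => exact nil _
  | cons hab _ ih => exact cons hab ih
  | skip hab _ ih => exact skip hab ih

theorem append_left_of_le {a : α} {s t u : List α} (hu : ∀ x ∈ u, a ≤ x)
    (h : StrongGapEmbeds (a :: s) t) : StrongGapEmbeds (a :: s) (u ++ t) := by
  induction u with
  | nil => exact h
  | cons x u ih => exact skip (hu x (by simp)) (ih fun y hy => hu y (by simp [hy]))

theorem cons_cons_append_of_le {b c : α} {s t u : List α} (hbc : b ≤ c) (hu : ∀ x ∈ u, b ≤ x)
    (h : StrongGapEmbeds s t) : StrongGapEmbeds (b :: s) (c :: (u ++ t)) := by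
  induction u generalizing c with
  | nil => exact cons hbc h
  | cons d u ih => exact skip hbc (ih (hu d (by simp)) fun y hy => hu y (by simp [hy]))

theorem append_cons {b : α} {s s' v w : List α} (h : StrongGapEmbeds s v)
    (hv : ∀ x ∈ v, b ≤ x) (h' : StrongGapEmbeds (b :: s') w) :
    StrongGapEmbeds (s ++ b :: s') (v ++ w) := by
  induction h with
  | nil t => exact append_left_of_le hv h'
  | cons hae _ ih => exact cons hae (ih fun x hx => hv x (by simp [hx]))
  | skip hae _ ih => exact skip hae (ih fun x hx => hv x (by simp [hx]))

end StrongGapEmbeds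

/-- The weak gap condition leaves the letters before the first match unconstrained. -/
def WeakGapEmbeds (s t : List α) : Prop :=
  ∃ u v, t = u ++ v ∧ StrongGapEmbeds s v

namespace WeakGapEmbeds

theorem weakGap {s t : List α} (h : WeakGapEmbeds s t) : WeakGap s t := by
  obtain ⟨u, v, rfl, hv⟩ := h
  exact hv.strongGap.weakGap.append_left u

theorem nil (t : List α) : WeakGapEmbeds [] t :=
  ⟨[], t, rfl, .nil t⟩

theorem append_left {s t : List α} (h : WeakGapEmbeds s t) (w : List α) :
    WeakGapEmbeds s (w ++ t) := by
  obtain ⟨u, v, rfl, hv⟩ := h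
  exact ⟨w ++ u, v, by simp, hv⟩

theorem append_right {s t : List α} (h : WeakGapEmbeds s t) (w : List α) :
    WeakGapEmbeds s (t ++ w) := by
  obtain ⟨u, v, rfl, hv⟩ := h
  exact ⟨u, v ++ w, by simp, hv.append_right w⟩

theorem append_cons {sl sr tl tr : List α} {b c : α} (hbc : b ≤ c) (htl : ∀ x ∈ tl, b ≤ x)
    (htr : ∀ x ∈ tr, b ≤ x) (hl : WeakGapEmbeds sl tl) (hr : WeakGapEmbeds sr tr) :
    WeakGapEmbeds (sl ++ b :: sr) (tl ++ c :: tr) := by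
  obtain ⟨u, v, rfl, hv⟩ := hl
  obtain ⟨u', v', rfl, hv'⟩ := hr
  refine ⟨u, v ++ c :: (u' ++ v'), by simp, hv.append_cons (fun x hx => htl x (by simp [hx])) ?_⟩
  exact .cons_cons_append_of_le hbc (fun x hx => htr x (by simp [hx])) hv'

end WeakGapEmbeds

theorem weakGapEmbeds_of_le_minSplitTree {s t : List α}
    (h : (minSplitTree s).Le (minSplitTree t)) : WeakGapEmbeds s t := by
  induction t using List.induction_on_append_cons_lt_le generalizing s with
  | nil =>
    rw [minSplitTree_nil, BTree.le_leaf_iff, minSplitTree_eq_leaf_iff] at h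
    exact h ▸ .nil []
  | append_cons tl c tr hl hr ihl ihr =>
    rw [minSplitTree_append_cons hl hr, BTree.le_node_iff] at h
    rcases h with h | h | ⟨b, Sl, Sr, hs, hbc, h_l, h_r⟩
    · exact (ihl h).append_right _
    · simpa using (ihr h).append_left (tl ++ [c])
    · have hs_ne : s ≠ [] := by rintro rfl; simp [minSplitTree_nil] at hs
      obtain ⟨sl, b', sr, rfl, hsl, hsr⟩ := List.exists_eq_append_cons_lt_le hs_ne
      rw [minSplitTree_append_cons hsl hsr, BTree.node.injEq] at hs
      obtain ⟨rfl, rfl, rfl⟩ := hs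
      exact .append_cons hbc (fun x hx => hbc.trans (hl x hx).le) (fun x hx => hbc.trans (hr x hx))
        (ihl h_l) (ihr h_r)

end

theorem weakGap_quasiEmbeds_into_btreeL_general {α : Type*} [LinearOrder α] :
    ∃ f : List α → BTree α,
      f [] = BTree.leaf ∧
      (∀ (sl : List α) (b : α) (sr : List α),
        (∀ x ∈ sl, b < x) → (∀ x ∈ sr, b ≤ x) →
          f (sl ++ b :: sr) = BTree.node b (f sl) (f sr)) ∧
      (∀ s : List α, (f s).IsBl) ∧
      (∀ s t : List α, BTree.Le (f s) (f t) → WeakGap s t) :=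
  ⟨minSplitTree, minSplitTree_nil, fun _ _ _ => minSplitTree_append_cons,
    isBl_minSplitTree, fun _ _ h => (weakGapEmbeds_of_le_minSplitTree h).weakGap⟩

/-- There is a quasi-embedding from sequences over `α` with the weak gap
condition into binary trees over `α` with weakly ascending inner labels that
ascend strictly on left subtrees: it sends a nonempty sequence to the tree
whose root is the first occurrence of the minimal member, and recursively
proceeds with the two corresponding subsequences. -/
theorem weakGap_quasiEmbeds_into_btreeL {α : Type*} [LinearOrder α]
    [WellFoundedLT α] :
    ∃ f : List α → BTree α,
      f [] = BTree.leaf ∧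
      (∀ (sl : List α) (b : α) (sr : List α),
        (∀ x ∈ sl, b < x) → (∀ x ∈ sr, b ≤ x) →
          f (sl ++ b :: sr) = BTree.node b (f sl) (f sr)) ∧
      (∀ s : List α, (f s).IsBl) ∧
      (∀ s t : List α, BTree.Le (f s) (f t) → WeakGap s t) :=
  weakGap_quasiEmbeds_into_btreeL_general
end

section
/- If a partial order X admits a reification into a well order α, i.e., a map r from nonempty finite bad sequences of X into α such that proper extensions strictly decrease r, then X is a well partial order. -/
/-!
If `g` had no pair `i < j` with `g i ≤ g j`, all its prefixes would be bad, each a proper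
extension of the previous one, so the reification would map them to a strictly decreasing
sequence in the well order `α`.
-/

/-- A finite sequence over a partial order is bad if no earlier member is less
than or equal to a later member. -/
def FinBad {X : Type*} [PartialOrder X] (s : List X) : Prop :=
  s.Pairwise fun a b => ¬ a ≤ b

theorem finBad_map_range {X : Type*} [PartialOrder X] {g : ℕ → X}
    (hg : ∀ i j, i < j → ¬ g i ≤ g j) (n : ℕ) : FinBad ((List.range n).map g) :=
  List.pairwise_map.2 <| List.pairwise_lt_range.imp (hg _ _)

theorem map_range_prefix_map_range_succ {X : Type*} (g : ℕ → X) (n : ℕ) :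
    (List.range n).map g <+: (List.range (n + 1)).map g :=
  ⟨[g n], by simp [List.range_succ]⟩

/-- If a partial order `X` admits a reification into a well order `α`, i.e., a
map on nonempty finite bad sequences that strictly decreases along proper
extensions, then `X` is a well partial order. -/
theorem wpo_of_reification {X : Type*} [PartialOrder X]
    {α : Type*} [LinearOrder α] [WellFoundedLT α] (r : List X → α)
    (hr : ∀ s t : List X, s ≠ [] → FinBad s → FinBad t → s <+: t → s ≠ t →
      r t < r s) :
    ∀ g : ℕ → X, ∃ i j : ℕ, i < j ∧ g i ≤ g j := by
  intro g
  by_contra! hg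
  have hdecr : StrictAnti fun n => r ((List.range (n + 1)).map g) :=
    strictAnti_nat_of_succ_lt fun n =>
      hr _ _ (by simp) (finBad_map_range hg _) (finBad_map_range hg _)
        (map_range_prefix_map_range_succ g _) fun h => by simpa using congrArg List.length h
  exact not_strictAnti_of_wellFoundedLT _ hdecr
end

section
/- For any ordinal α with Cantor normal form α = ω^γ + δ (δ < ω^{γ+1}), there is a quasi-embedding from B_{α,1} into B_{ω^γ, X} where X := B_{δ,1}; the analogous quasi-embedding exists for B^l in place of B. -/
universe u

/-- Binary trees with leaf labels in `X` and ordinal inner labels. -/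
inductive OTree (X : Type u) where
  | leaf (x : X)
  | node (b : Ordinal.{0}) (l r : OTree X)

/-- The infimum-preserving embeddability relation on such trees, relative to a
comparison relation `leX` on the leaf labels. -/
inductive OTree.Le {X : Type u} (leX : X → X → Prop) : OTree X → OTree X → Prop
  | leaf {x y : X} : leX x y → OTree.Le leX (.leaf x) (.leaf y)
  | left {s : OTree X} {γ : Ordinal.{0}} {tl tr : OTree X} :
      OTree.Le leX s tl → OTree.Le leX s (.node γ tl tr)
  | right {s : OTree X} {γ : Ordinal.{0}} {tl tr : OTree X} :
      OTree.Le leX s tr → OTree.Le leX s (.node γ tl tr)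
  | node {β γ : Ordinal.{0}} {sl sr tl tr : OTree X} :
      β ≤ γ → OTree.Le leX sl tl → OTree.Le leX sr tr →
        OTree.Le leX (.node β sl sr) (.node γ tl tr)

/-- The inner labels of a tree. -/
def OTree.innerLabels {X : Type u} : OTree X → List Ordinal.{0}
  | .leaf _ => []
  | .node b l r => b :: (l.innerLabels ++ r.innerLabels)

/-- The leaf labels of a tree. -/
def OTree.leafLabels {X : Type u} : OTree X → List X
  | .leaf x => [x]
  | .node _ l r => l.leafLabels ++ r.leafLabels

/-- Weakly ascending inner labels (the trees of `B`). -/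
def OTree.IsB {X : Type u} : OTree X → Prop
  | .leaf _ => True
  | .node b l r =>
      (∀ x ∈ l.innerLabels, b ≤ x) ∧ (∀ x ∈ r.innerLabels, b ≤ x) ∧
        l.IsB ∧ r.IsB

/-- Weakly ascending inner labels, ascending strictly on left subtrees (the
trees of `B^l`). -/
def OTree.IsBl {X : Type u} : OTree X → Prop
  | .leaf _ => True
  | .node b l r =>
      (∀ x ∈ l.innerLabels, b < x) ∧ (∀ x ∈ r.innerLabels, b ≤ x) ∧
        l.IsBl ∧ r.IsBl

/-- All inner labels lie strictly below `a`. -/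
def OTree.BoundedBy {X : Type u} (a : Ordinal.{0}) (t : OTree X) : Prop :=
  ∀ x ∈ t.innerLabels, x < a

/-! The trees of `B_{α,1}` are cut at height `c = ω^γ`: the part below `c` is kept, and every
maximal subtree whose labels are all `≥ c` becomes a leaf, labelled by that subtree with `c`
subtracted from its labels. Since `c + (x - c) = x` for `x ≥ c`, adding `c` back undoes the
subtraction and preserves embeddability, so an embedding between the cut trees lifts back to one
between the original trees. -/

lemma Ordinal.monotone_sub_right (c : Ordinal) : Monotone (· - c) :=
  fun _ y h => Ordinal.sub_le.2 (h.trans (Ordinal.le_add_sub y c))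

lemma Ordinal.strictMonoOn_sub_right (c : Ordinal) : StrictMonoOn (· - c) (Set.Ici c) :=
  fun x hx y hy h => (Ordinal.sub_lt_of_le hx).2 <| by
    rwa [Ordinal.add_sub_cancel_of_le (show c ≤ y from hy)]

namespace OTree

variable {X : Type u}

def mapLabels (g : Ordinal.{0} → Ordinal.{0}) : OTree X → OTree X
  | .leaf x => .leaf x
  | .node b l r => .node (g b) (l.mapLabels g) (r.mapLabels g)

def BoundedBelowBy (c : Ordinal.{0}) (t : OTree X) : Prop :=
  ∀ x ∈ t.innerLabels, c ≤ x

@[simp]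
lemma innerLabels_mapLabels (g : Ordinal.{0} → Ordinal.{0}) (t : OTree X) :
    (t.mapLabels g).innerLabels = t.innerLabels.map g := by
  induction t with
  | leaf x => rfl
  | node b l r ihl ihr => simp [mapLabels, innerLabels, ihl, ihr]

lemma mapLabels_eq_self {g : Ordinal.{0} → Ordinal.{0}} {t : OTree X}
    (h : ∀ x ∈ t.innerLabels, g x = x) : t.mapLabels g = t := by
  induction t with
  | leaf x => rfl
  | node b l r ihl ihr =>
    simp only [innerLabels, List.mem_cons, List.mem_append] at h
    simp only [mapLabels, h b (.inl rfl), ihl fun x hx => h x (.inr (.inl hx)),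
      ihr fun x hx => h x (.inr (.inr hx))]

lemma mapLabels_mapLabels (f g : Ordinal.{0} → Ordinal.{0}) (t : OTree X) :
    (t.mapLabels f).mapLabels g = t.mapLabels (g ∘ f) := by
  induction t with
  | leaf x => rfl
  | node b l r ihl ihr => simp [mapLabels, ihl, ihr]

lemma isB_mapLabels {g : Ordinal.{0} → Ordinal.{0}} (hg : Monotone g) {t : OTree X}
    (ht : t.IsB) : (t.mapLabels g).IsB := by
  induction t with
  | leaf x => trivial
  | node b l r ihl ihr =>
    obtain ⟨hl, hr, Bl, Br⟩ := ht
    simp only [mapLabels, IsB, innerLabels_mapLabels, List.forall_mem_map]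
    exact ⟨fun x hx => hg (hl x hx), fun x hx => hg (hr x hx), ihl Bl, ihr Br⟩

lemma isBl_mapLabels {g : Ordinal.{0} → Ordinal.{0}} {S : Set Ordinal.{0}} (hg : StrictMonoOn g S)
    {t : OTree X} (hS : ∀ x ∈ t.innerLabels, x ∈ S) (ht : t.IsBl) : (t.mapLabels g).IsBl := by
  induction t with
  | leaf x => trivial
  | node b l r ihl ihr =>
    obtain ⟨hl, hr, Bl, Br⟩ := ht
    simp only [innerLabels, List.mem_cons, List.mem_append] at hS
    have hSl : ∀ x ∈ l.innerLabels, x ∈ S := fun x hx => hS x (.inr (.inl hx))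
    have hSr : ∀ x ∈ r.innerLabels, x ∈ S := fun x hx => hS x (.inr (.inr hx))
    simp only [mapLabels, IsBl, innerLabels_mapLabels, List.forall_mem_map]
    exact ⟨fun x hx => hg (hS b (.inl rfl)) (hSl x hx) (hl x hx),
      fun x hx => hg.monotoneOn (hS b (.inl rfl)) (hSr x hx) (hr x hx), ihl hSl Bl, ihr hSr Br⟩

lemma Le.mapLabels {leX : X → X → Prop} {g : Ordinal.{0} → Ordinal.{0}} (hg : Monotone g)
    {s t : OTree X} (h : OTree.Le leX s t) : OTree.Le leX (s.mapLabels g) (t.mapLabels g) := by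
  induction h with
  | leaf h => exact .leaf h
  | left _ ih => exact .left ih
  | right _ ih => exact .right ih
  | node hle _ _ ihl ihr => exact .node (hg hle) ihl ihr

lemma mapLabels_add_sub {c : Ordinal.{0}} {t : OTree X} (ht : t.BoundedBelowBy c) :
    (t.mapLabels (· - c)).mapLabels (c + ·) = t := by
  rw [mapLabels_mapLabels]
  exact mapLabels_eq_self fun x hx => Ordinal.add_sub_cancel_of_le (ht x hx)

lemma le_of_le_mapLabels_sub {leX : X → X → Prop} {c : Ordinal.{0}} {s t : OTree X}
    (hs : s.BoundedBelowBy c) (ht : t.BoundedBelowBy c)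
    (h : OTree.Le leX (s.mapLabels (· - c)) (t.mapLabels (· - c))) : OTree.Le leX s t := by
  simpa only [mapLabels_add_sub hs, mapLabels_add_sub ht] using
    h.mapLabels (g := (c + ·)) fun _ _ hxy => add_le_add_right hxy c

@[simp]
lemma boundedBelowBy_node {c b : Ordinal.{0}} {l r : OTree X} :
    (node b l r).BoundedBelowBy c ↔ c ≤ b ∧ l.BoundedBelowBy c ∧ r.BoundedBelowBy c := by
  simp [BoundedBelowBy, innerLabels, or_imp, forall_and]

@[simp]
lemma boundedBy_node {a b : Ordinal.{0}} {l r : OTree X} :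
    (node b l r).BoundedBy a ↔ b < a ∧ l.BoundedBy a ∧ r.BoundedBy a := by
  simp [BoundedBy, innerLabels, or_imp, forall_and]

lemma IsBl.isB {t : OTree X} (h : t.IsBl) : t.IsB := by
  induction t with
  | leaf x => trivial
  | node b l r ihl ihr => exact ⟨fun x hx => (h.1 x hx).le, h.2.1, ihl h.2.2.1, ihr h.2.2.2⟩

lemma IsB.boundedBelowBy_node {c b : Ordinal.{0}} {l r : OTree X} (h : (node b l r).IsB)
    (hb : c ≤ b) : (node b l r).BoundedBelowBy c :=
  OTree.boundedBelowBy_node.2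
    ⟨hb, fun x hx => hb.trans (h.1 x hx), fun x hx => hb.trans (h.2.1 x hx)⟩

lemma boundedBy_mapLabels_sub {c δ : Ordinal.{0}} {t : OTree X} (hc : t.BoundedBelowBy c)
    (h : t.BoundedBy (c + δ)) : (t.mapLabels (· - c)).BoundedBy δ := by
  simp only [BoundedBy, innerLabels_mapLabels, List.forall_mem_map]
  exact fun x hx => (Ordinal.sub_lt_of_le (hc x hx)).2 (h x hx)

open Classical in
/-- On trees with ascending labels, `BoundedBelowBy c` only asks that the root label be `≥ c`,
so this is the map `β⋆[t_l, t_r] ↦ β⋆[f t_l, f t_r]` for `β < c` of the paper. -/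
noncomputable def cut (c : Ordinal.{0}) : OTree X → OTree (OTree X)
  | .leaf x => .leaf (.leaf x)
  | .node b l r =>
    if (node b l r).BoundedBelowBy c then .leaf ((node b l r).mapLabels (· - c))
    else .node b (l.cut c) (r.cut c)

lemma cut_of_boundedBelowBy {c : Ordinal.{0}} {t : OTree X} (h : t.BoundedBelowBy c) :
    t.cut c = .leaf (t.mapLabels (· - c)) := by
  cases t with
  | leaf x => rfl
  | node b l r => exact if_pos h

lemma cut_node_of_not_boundedBelowBy {c b : Ordinal.{0}} {l r : OTree X}
    (h : ¬ (node b l r).BoundedBelowBy c) : (node b l r).cut c = .node b (l.cut c) (r.cut c) :=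
  if_neg h

lemma innerLabels_cut_subset (c : Ordinal.{0}) (t : OTree X) :
    ∀ x ∈ (t.cut c).innerLabels, x ∈ t.innerLabels := by
  induction t with
  | leaf x => simp [cut, innerLabels]
  | node b l r ihl ihr =>
    by_cases h : (node b l r).BoundedBelowBy c
    · simp [cut_of_boundedBelowBy h, innerLabels]
    · simp only [cut_node_of_not_boundedBelowBy h, innerLabels, List.mem_cons, List.mem_append]
      rintro x (rfl | hx | hx)
      exacts [.inl rfl, .inr (.inl (ihl x hx)), .inr (.inr (ihr x hx))]

lemma isB_cut (c : Ordinal.{0}) {t : OTree X} (ht : t.IsB) : (t.cut c).IsB := by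
  induction t with
  | leaf x => trivial
  | node b l r ihl ihr =>
    by_cases h : (node b l r).BoundedBelowBy c
    · rw [cut_of_boundedBelowBy h]; trivial
    · rw [cut_node_of_not_boundedBelowBy h]
      exact ⟨fun x hx => ht.1 x (innerLabels_cut_subset c l x hx),
        fun x hx => ht.2.1 x (innerLabels_cut_subset c r x hx), ihl ht.2.2.1, ihr ht.2.2.2⟩

lemma isBl_cut (c : Ordinal.{0}) {t : OTree X} (ht : t.IsBl) : (t.cut c).IsBl := by
  induction t with
  | leaf x => trivial
  | node b l r ihl ihr =>
    by_cases h : (node b l r).BoundedBelowBy c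
    · rw [cut_of_boundedBelowBy h]; trivial
    · rw [cut_node_of_not_boundedBelowBy h]
      exact ⟨fun x hx => ht.1 x (innerLabels_cut_subset c l x hx),
        fun x hx => ht.2.1 x (innerLabels_cut_subset c r x hx), ihl ht.2.2.1, ihr ht.2.2.2⟩

lemma boundedBy_cut (c : Ordinal.{0}) {t : OTree X} (ht : t.IsB) : (t.cut c).BoundedBy c := by
  induction t with
  | leaf x => simp [cut, BoundedBy, innerLabels]
  | node b l r ihl ihr =>
    by_cases h : (node b l r).BoundedBelowBy c
    · simp [cut_of_boundedBelowBy h, BoundedBy, innerLabels]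
    · have hb : b < c := lt_of_not_ge fun hb => h (ht.boundedBelowBy_node hb)
      rw [cut_node_of_not_boundedBelowBy h, boundedBy_node]
      exact ⟨hb, ihl ht.2.2.1, ihr ht.2.2.2⟩

/-- The leaves of `t.cut c` come from subtrees of `t`, so they inherit every property of `t`
that passes to subtrees. -/
lemma exists_of_mem_leafLabels_cut {c : Ordinal.{0}} (P : OTree X → Prop)
    (hP : ∀ b l r, P (node b l r) → P l ∧ P r) {t : OTree X} (ht : P t) :
    ∀ u ∈ (t.cut c).leafLabels,
      ∃ t', P t' ∧ t'.BoundedBelowBy c ∧ u = t'.mapLabels (· - c) := by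
  induction t with
  | leaf x =>
    simp only [cut, leafLabels, List.mem_singleton]
    exact fun u hu => ⟨.leaf x, ht, by simp [BoundedBelowBy, innerLabels], hu⟩
  | node b l r ihl ihr =>
    by_cases h : (node b l r).BoundedBelowBy c
    · simp only [cut_of_boundedBelowBy h, leafLabels, List.mem_singleton]
      exact fun u hu => ⟨_, ht, h, hu⟩
    · simp only [cut_node_of_not_boundedBelowBy h, leafLabels, List.mem_append]
      rintro u (hu | hu)
      exacts [ihl (hP b l r ht).1 u hu, ihr (hP b l r ht).2 u hu]

lemma leafLabels_cut_isB {c δ : Ordinal.{0}} {t : OTree X} (ht : t.IsB)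
    (hbd : t.BoundedBy (c + δ)) : ∀ u ∈ (t.cut c).leafLabels, u.IsB ∧ u.BoundedBy δ := by
  intro u hu
  obtain ⟨t', ⟨hB, hbd'⟩, hc, rfl⟩ := exists_of_mem_leafLabels_cut
    (fun t => t.IsB ∧ t.BoundedBy (c + δ))
    (fun _ _ _ ⟨hB, hbd⟩ =>
      ⟨⟨hB.2.2.1, (boundedBy_node.1 hbd).2.1⟩, ⟨hB.2.2.2, (boundedBy_node.1 hbd).2.2⟩⟩)
    ⟨ht, hbd⟩ u hu
  exact ⟨isB_mapLabels (Ordinal.monotone_sub_right c) hB, boundedBy_mapLabels_sub hc hbd'⟩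

lemma leafLabels_cut_isBl {c δ : Ordinal.{0}} {t : OTree X} (ht : t.IsBl)
    (hbd : t.BoundedBy (c + δ)) : ∀ u ∈ (t.cut c).leafLabels, u.IsBl ∧ u.BoundedBy δ := by
  intro u hu
  obtain ⟨t', ⟨hB, hbd'⟩, hc, rfl⟩ := exists_of_mem_leafLabels_cut
    (fun t => t.IsBl ∧ t.BoundedBy (c + δ))
    (fun _ _ _ ⟨hB, hbd⟩ =>
      ⟨⟨hB.2.2.1, (boundedBy_node.1 hbd).2.1⟩, ⟨hB.2.2.2, (boundedBy_node.1 hbd).2.2⟩⟩)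
    ⟨ht, hbd⟩ u hu
  exact ⟨isBl_mapLabels (Ordinal.strictMonoOn_sub_right c) hc hB,
    boundedBy_mapLabels_sub hc hbd'⟩

lemma boundedBelowBy_of_cut_eq_leaf {c : Ordinal.{0}} {t u : OTree X} (h : t.cut c = .leaf u) :
    t.BoundedBelowBy c ∧ u = t.mapLabels (· - c) := by
  by_cases ht : t.BoundedBelowBy c
  · rw [cut_of_boundedBelowBy ht, leaf.injEq] at h
    exact ⟨ht, h.symm⟩
  · cases t with
    | leaf x => exact absurd (by simp [BoundedBelowBy, innerLabels]) ht
    | node b l r => simp [cut_node_of_not_boundedBelowBy ht] at h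

lemma exists_of_cut_eq_node {c b : Ordinal.{0}} {t : OTree X} {A B : OTree (OTree X)}
    (h : t.cut c = .node b A B) : ∃ l r, t = .node b l r ∧ A = l.cut c ∧ B = r.cut c := by
  by_cases ht : t.BoundedBelowBy c
  · simp [cut_of_boundedBelowBy ht] at h
  · cases t with
    | leaf x => exact absurd (by simp [BoundedBelowBy, innerLabels]) ht
    | node b' l r =>
      rw [cut_node_of_not_boundedBelowBy ht, node.injEq] at h
      obtain ⟨rfl, rfl, rfl⟩ := h
      exact ⟨l, r, rfl, rfl, rfl⟩

lemma le_of_le_cut {leX : X → X → Prop} {c : Ordinal.{0}} {s t : OTree X}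
    (h : OTree.Le (OTree.Le leX) (s.cut c) (t.cut c)) : OTree.Le leX s t := by
  generalize hS : s.cut c = S at h
  generalize hT : t.cut c = T at h
  induction h generalizing s t with
  | leaf h =>
    obtain ⟨hs, rfl⟩ := boundedBelowBy_of_cut_eq_leaf hS
    obtain ⟨ht, rfl⟩ := boundedBelowBy_of_cut_eq_leaf hT
    exact le_of_le_mapLabels_sub hs ht h
  | left _ ih =>
    obtain ⟨l, r, rfl, rfl, rfl⟩ := exists_of_cut_eq_node hT
    exact .left (ih hS rfl)
  | right _ ih =>
    obtain ⟨l, r, rfl, rfl, rfl⟩ := exists_of_cut_eq_node hT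
    exact .right (ih hS rfl)
  | node hle _ _ ihl ihr =>
    obtain ⟨sl, sr, rfl, rfl, rfl⟩ := exists_of_cut_eq_node hS
    obtain ⟨l, r, rfl, rfl, rfl⟩ := exists_of_cut_eq_node hT
    exact .node hle (ihl rfl rfl) (ihr rfl rfl)

end OTree

theorem btree_quasiEmbeds_decomposable_general (γ δ α : Ordinal.{0})
    (hα : α = Ordinal.omega0 ^ γ + δ) :
    (∃ f : OTree Unit → OTree (OTree Unit),
      (∀ t : OTree Unit, t.IsB → t.BoundedBy α →
        (f t).IsB ∧ (f t).BoundedBy (Ordinal.omega0 ^ γ) ∧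
          ∀ u ∈ (f t).leafLabels, u.IsB ∧ u.BoundedBy δ) ∧
      (∀ s t : OTree Unit, s.IsB → s.BoundedBy α → t.IsB → t.BoundedBy α →
        OTree.Le (OTree.Le fun _ _ => True) (f s) (f t) →
          OTree.Le (fun _ _ => True) s t)) ∧
    (∃ f : OTree Unit → OTree (OTree Unit),
      (∀ t : OTree Unit, t.IsBl → t.BoundedBy α →
        (f t).IsBl ∧ (f t).BoundedBy (Ordinal.omega0 ^ γ) ∧
          ∀ u ∈ (f t).leafLabels, u.IsBl ∧ u.BoundedBy δ) ∧
      (∀ s t : OTree Unit, s.IsBl → s.BoundedBy α → t.IsBl → t.BoundedBy α →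
        OTree.Le (OTree.Le fun _ _ => True) (f s) (f t) →
          OTree.Le (fun _ _ => True) s t)) := by
  subst hα
  refine ⟨⟨OTree.cut (Ordinal.omega0 ^ γ), fun t hB hbd => ?_,
      fun _ _ _ _ _ _ => OTree.le_of_le_cut⟩,
    ⟨OTree.cut (Ordinal.omega0 ^ γ), fun t hBl hbd => ?_,
      fun _ _ _ _ _ _ => OTree.le_of_le_cut⟩⟩
  · exact ⟨OTree.isB_cut _ hB, OTree.boundedBy_cut _ hB, OTree.leafLabels_cut_isB hB hbd⟩
  · exact ⟨OTree.isBl_cut _ hBl, OTree.boundedBy_cut _ hBl.isB,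
      OTree.leafLabels_cut_isBl hBl hbd⟩

/-- For `α = ω^γ + δ` in Cantor normal form, there is a quasi-embedding from
`B_{α,1}` into `B_{ω^γ,X}` where `X := B_{δ,1}`, and analogously for `B^l`. -/
theorem btree_quasiEmbeds_decomposable (γ δ α : Ordinal.{0})
    (hα : α = Ordinal.omega0 ^ γ + δ) (hδ : δ < Ordinal.omega0 ^ (γ + 1)) :
    (∃ f : OTree Unit → OTree (OTree Unit),
      (∀ t : OTree Unit, t.IsB → t.BoundedBy α →
        (f t).IsB ∧ (f t).BoundedBy (Ordinal.omega0 ^ γ) ∧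
          ∀ u ∈ (f t).leafLabels, u.IsB ∧ u.BoundedBy δ) ∧
      (∀ s t : OTree Unit, s.IsB → s.BoundedBy α → t.IsB → t.BoundedBy α →
        OTree.Le (OTree.Le fun _ _ => True) (f s) (f t) →
          OTree.Le (fun _ _ => True) s t)) ∧
    (∃ f : OTree Unit → OTree (OTree Unit),
      (∀ t : OTree Unit, t.IsBl → t.BoundedBy α →
        (f t).IsBl ∧ (f t).BoundedBy (Ordinal.omega0 ^ γ) ∧
          ∀ u ∈ (f t).leafLabels, u.IsBl ∧ u.BoundedBy δ) ∧
      (∀ s t : OTree Unit, s.IsBl → s.BoundedBy α → t.IsBl → t.BoundedBy α →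
        OTree.Le (OTree.Le fun _ _ => True) (f s) (f t) →
          OTree.Le (fun _ _ => True) s t)) :=
  btree_quasiEmbeds_decomposable_general γ δ α hα
end

section
/- For any ordinal β, left addition preserves and left subtraction reflects the weak gap condition: (a) β + s ≤_w β + t implies s ≤_w t; (b) if ω^β > γ, then ω^β + s ≤_w γ + t implies ω^β + s ≤_w t; here β + s denotes the sequence obtained by adding β on the left to each member of s. -/
/-- The same embedding works: each of its conditions compares one entry of `s` with one of `t`. -/
theorem WeakGap.of_map {ι κ α β : Type*} [LinearOrder α] [LinearOrder β]
    {s : List ι} {t : List κ} {g : ι → α} {h : κ → α} {g' : ι → β} {h' : κ → β}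
    (hle : ∀ a b, g a ≤ h b → g' a ≤ h' b) (hgap : WeakGap (s.map g) (t.map h)) :
    WeakGap (s.map g') (t.map h') := by
  obtain ⟨f, hf_mono, hf_le, hf_gap⟩ := hgap
  have hs : (s.map g').length = (s.map g).length := by simp only [List.length_map]
  have ht : (t.map h).length = (t.map h').length := by simp only [List.length_map]
  refine ⟨fun i => Fin.cast ht (f (Fin.cast hs i)), ?_, fun i => ?_, fun i hi j hij hji => ?_⟩
  · exact fun i j hij => hf_mono (Fin.cast_strictMono hs hij)
  · have hi := hf_le (Fin.cast hs i)
    simp only [List.get_eq_getElem, List.getElem_map] at hi ⊢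
    exact hle _ _ hi
  · have hgap_ij := hf_gap i (hs ▸ hi) (Fin.cast ht.symm j) hij hji
    simp only [List.get_eq_getElem, List.getElem_map] at hgap_ij ⊢
    exact hle _ _ hgap_ij

theorem WeakGap.of_map_left_add (β : Ordinal) {s t : List Ordinal}
    (hgap : WeakGap (s.map (β + ·)) (t.map (β + ·))) : WeakGap s t := by
  simpa only [List.map_id] using
    WeakGap.of_map (g' := id) (h' := id) (fun _ _ => (add_le_add_iff_left β).mp) hgap

namespace Ordinal

/-- As `ω ^ β` is additively principal, `b < ω ^ β` would give `γ + b < ω ^ β`; otherwise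
`γ + b = b`. -/
theorem omega0_opow_add_le_of_le_add {β γ a b : Ordinal} (hγ : γ < ω ^ β)
    (hle : ω ^ β + a ≤ γ + b) : ω ^ β + a ≤ b := by
  have hb : ω ^ β ≤ b := by
    by_contra! hb
    exact (le_self_add.trans hle).not_gt (isPrincipal_add_omega0_opow β hγ hb)
  rwa [add_of_omega0_opow_le hγ hb] at hle

end Ordinal

/-- Left addition can be cancelled from the weak gap condition, and smaller
left summands can be dropped when the left-hand side starts with a larger
indecomposable summand. -/
theorem weakGap_left_addition (β γ : Ordinal.{0}) (s t : List Ordinal.{0}) :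
    (WeakGap (s.map (β + ·)) (t.map (β + ·)) → WeakGap s t) ∧
    (Ordinal.omega0 ^ β > γ →
      WeakGap (s.map (Ordinal.omega0 ^ β + ·)) (t.map (γ + ·)) →
        WeakGap (s.map (Ordinal.omega0 ^ β + ·)) t) := by
  refine ⟨WeakGap.of_map_left_add β, fun hγ hgap => ?_⟩
  simpa only [List.map_id] using
    WeakGap.of_map (h' := id) (fun _ _ => Ordinal.omega0_opow_add_le_of_le_add hγ) hgap
end

section
/- Let X be a partial order, and let X^• be the relation on finite sequences over X defined as the smallest relation satisfying: ⟨⟩ ≤ s; ⟨x⟩*s ≤ ⟨y⟩*t if x ≤ y and s ≤ t; s ≤ ⟨y⟩*t if s ≤ t; and s_l*s_r ≤ ⟨y⟩*t if every member of s_l is strictly below y and s_r ≤ t. Then X^• is transitive. -/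
/-- The modified Higman order `X^•` on finite sequences over a partial order:
Higman's clauses together with the absorption of a prefix lying strictly below
the head of the right-hand sequence. -/
inductive DotLe {X : Type*} [PartialOrder X] : List X → List X → Prop
  | nil (t : List X) : DotLe [] t
  | cons {x y : X} {s t : List X} : x ≤ y → DotLe s t → DotLe (x :: s) (y :: t)
  | skip {y : X} {s t : List X} : DotLe s t → DotLe s (y :: t)
  | absorb {y : X} {sl sr t : List X} :
      (∀ a ∈ sl, a < y) → DotLe sr t → DotLe (sl ++ sr) (y :: t)

theorem dotLe_mem {X : Type*} [PartialOrder X] {s t : List X}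
    (h : DotLe s t) : ∀ a ∈ s, ∃ b ∈ t, a ≤ b := by
  induction h with
  | nil => simp
  | cons hxy h ih =>
    intro a ha
    rcases List.mem_cons.1 ha with rfl | ha
    · exact ⟨_, List.mem_cons_self .., hxy⟩
    · obtain ⟨b, hb, hab⟩ := ih a ha
      exact ⟨b, List.mem_cons_of_mem _ hb, hab⟩
  | skip h ih =>
    intro a ha
    obtain ⟨b, hb, hab⟩ := ih a ha
    exact ⟨b, List.mem_cons_of_mem _ hb, hab⟩
  | absorb hlt h ih =>
    intro a ha
    rcases List.mem_append.1 ha with ha | ha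
    · exact ⟨_, List.mem_cons_self .., (hlt a ha).le⟩
    · obtain ⟨b, hb, hab⟩ := ih a ha
      exact ⟨b, List.mem_cons_of_mem _ hb, hab⟩

theorem dotLe_append_split {X : Type*} [PartialOrder X] {s w : List X}
    (h : DotLe s w) : ∀ tl tr, w = tl ++ tr →
    ∃ sl sr, s = sl ++ sr ∧ DotLe sl tl ∧ DotLe sr tr := by
  induction h with
  | nil t => exact fun tl tr _ => ⟨[], [], rfl, .nil _, .nil _⟩
  | @cons x y s t hxy h ih =>
    rintro (_ | ⟨z, tl'⟩) tr heq
    · simp only [List.nil_append] at heq; exact ⟨[], x :: s, rfl, .nil _, heq ▸ .cons hxy h⟩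
    · obtain ⟨h1, h2⟩ := List.cons.injEq .. ▸ heq
      obtain ⟨sl, sr, rfl, h3, h4⟩ := ih tl' tr h2
      exact ⟨x :: sl, sr, rfl, .cons (h1 ▸ hxy) h3, h4⟩
  | @skip y s t h ih =>
    rintro (_ | ⟨z, tl'⟩) tr heq
    · simp only [List.nil_append] at heq; exact ⟨[], s, rfl, .nil _, heq ▸ .skip h⟩
    · obtain ⟨h1, h2⟩ := List.cons.injEq .. ▸ heq
      obtain ⟨sl, sr, rfl, h3, h4⟩ := ih tl' tr h2
      exact ⟨sl, sr, rfl, .skip h3, h4⟩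
  | @absorb y al ar t hlt h ih =>
    rintro (_ | ⟨z, tl'⟩) tr heq
    · simp only [List.nil_append] at heq; exact ⟨[], al ++ ar, rfl, .nil _, heq ▸ .absorb hlt h⟩
    · obtain ⟨h1, h2⟩ := List.cons.injEq .. ▸ heq
      obtain ⟨sl, sr, rfl, h3, h4⟩ := ih tl' tr h2
      exact ⟨al ++ sl, sr, by simp, .absorb (h1 ▸ hlt) h3, h4⟩

/-- The relation `X^•` is transitive. -/
theorem dotLe_trans {X : Type*} [PartialOrder X] {s t u : List X}
    (h₁ : DotLe s t) (h₂ : DotLe t u) : DotLe s u := by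
  induction h₂ generalizing s with
  | nil t => cases h₁; exact .nil _
  | @cons x y t' u' hxy h ih =>
    cases h₁ with
    | nil => exact .nil _
    | cons hax h' => exact .cons (hax.trans hxy) (ih h')
    | skip h' => exact .skip (ih h')
    | absorb hlt h' => exact .absorb (fun a ha => (hlt a ha).trans_le hxy) (ih h')
  | skip h ih => exact .skip (ih h₁)
  | @absorb y tl tr u' hlt h ih =>
    obtain ⟨sl, sr, rfl, h3, h4⟩ := dotLe_append_split h₁ tl tr rfl
    refine .absorb (fun a ha => ?_) (ih h4)
    obtain ⟨b, hb, hab⟩ := dotLe_mem h3 a ha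
    exact hab.trans_lt (hlt b hb)
end

section
/- Let X be a partial order and X^• the modified sequence order. If s ≤ t in X^• where s = s_l * r and t = t_l * r share a common final segment r, then s_l ≤ t_l in X^•. -/
private lemma dotLe_nil_right {X : Type*} [PartialOrder X] {u : List X}
    (h : DotLe u ([] : List X)) : u = [] := by
  cases h; rfl

private lemma dotLe_cancel_one {X : Type*} [PartialOrder X] :
    ∀ {u v : List X}, DotLe u v → ∀ {s t : List X} {a : X},
      u = s ++ [a] → v = t ++ [a] → DotLe s t := by
  intro u v h
  induction h with
  | nil t =>
    intro s t a hu hv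
    exact absurd hu.symm (by simp)
  | @cons x y s' t' hxy hst ih =>
    intro s t a hu hv
    cases t with
    | nil =>
      simp only [List.nil_append, List.cons.injEq] at hv
      obtain ⟨hy, ht'⟩ := hv
      subst hy; subst ht'
      have hs' := dotLe_nil_right hst
      subst hs'
      cases s with
      | nil => exact DotLe.nil []
      | cons c s0 =>
        simp only [List.cons_append, List.cons.injEq] at hu
        exact absurd hu.2.symm (by simp)
    | cons b t0 =>
      simp only [List.cons_append, List.cons.injEq] at hv
      obtain ⟨hy, ht'⟩ := hv
      subst hy
      cases s with
      | nil => exact DotLe.nil _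
      | cons c s0 =>
        simp only [List.cons_append, List.cons.injEq] at hu
        obtain ⟨hx, hs'⟩ := hu
        subst hx
        exact DotLe.cons hxy (ih hs' ht')
  | @skip y s' t' hst ih =>
    intro s t a hu hv
    cases t with
    | nil =>
      simp only [List.nil_append, List.cons.injEq] at hv
      obtain ⟨hy, ht'⟩ := hv
      subst ht'
      subst hu
      have := dotLe_nil_right hst
      exact absurd this (by simp)
    | cons b t0 =>
      simp only [List.cons_append, List.cons.injEq] at hv
      obtain ⟨hy, ht'⟩ := hv
      subst hy
      exact DotLe.skip (ih hu ht')
  | @absorb y sl sr t' hlt hst ih =>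
    intro s t a hu hv
    rcases sr.eq_nil_or_concat with hsr | ⟨sr0, b, hsr⟩
    · subst hsr
      simp only [List.append_nil] at hu
      subst hu
      cases t with
      | nil =>
        simp only [List.nil_append, List.cons.injEq] at hv
        obtain ⟨hy, _⟩ := hv
        subst hy
        exact absurd (hlt _ (by simp)) (lt_irrefl _)
      | cons c t0 =>
        simp only [List.cons_append, List.cons.injEq] at hv
        obtain ⟨hy, ht'⟩ := hv
        subst hy
        have h2 := DotLe.absorb (t := t0)
          (fun x hx => hlt x (List.mem_append_left _ hx)) (DotLe.nil t0)
        simpa using h2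
    · subst hsr
      have hu' : (sl ++ sr0) ++ [b] = s ++ [a] := by
        simpa [List.concat_eq_append, List.append_assoc] using hu
      have hs : sl ++ sr0 = s := List.append_inj_left' hu' (by simp)
      have hb : b = a := by
        have := List.append_inj_right' hu' (by simp)
        simpa using this
      subst hb
      cases t with
      | nil =>
        simp only [List.nil_append, List.cons.injEq] at hv
        obtain ⟨hy, ht'⟩ := hv
        subst ht'
        have := dotLe_nil_right hst
        exact absurd this (by simp)
      | cons c t0 =>
        simp only [List.cons_append, List.cons.injEq] at hv
        obtain ⟨hy, ht'⟩ := hv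
        subst hy
        subst hs
        exact DotLe.absorb hlt (ih (by simp [List.concat_eq_append]) ht')

/-- Right cancellation of a common final segment for `X^•`. -/
theorem dotLe_cancel_suffix {X : Type*} [PartialOrder X]
    {sl tl r : List X} (h : DotLe (sl ++ r) (tl ++ r)) : DotLe sl tl := by
  induction r generalizing sl tl with
  | nil => simpa using h
  | cons a r' ih =>
    have h' : DotLe ((sl ++ [a]) ++ r') ((tl ++ [a]) ++ r') := by simpa using h
    exact dotLe_cancel_one (ih h') rfl rfl
end
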